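/- arXiv:2009.02001 — 12 statements merged into one kernel-verified Lean document; each statement's English description precedes it below -/
import Mathlib

section
/- For all integers n ≥ c ≥ 1, every n-vertex graph G with nonrepetitive chromatic number π(G) ≤ c has at most (c−1)n − C(c,2) edges, where C(c,2) is the binomial coefficient c choose 2. -/
/-- `v 0, v 1, …, v (n-1)` is a path in `G`. -/
def IsPathSeq {V : Type*} (G : SimpleGraph V) (n : ℕ) (v : ℕ → V) : Prop :=
  (∀ i, i + 1 < n → G.Adj (v i) (v (i + 1))) ∧
  (∀ i j, i < n → j < n → v i = v j → i = j)

/-- A nonrepetitive colouring of `G`. -/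
def NonrepetitiveColoring {V C : Type*} (G : SimpleGraph V) (φ : V → C) : Prop :=
  ∀ t : ℕ, 0 < t → ∀ v : ℕ → V, IsPathSeq G (2 * t) v →
    ∃ i < t, φ (v i) ≠ φ (v (t + i))

/-! A nonrepetitive colouring is proper, and a cycle using only two colours would contain either
two adjacent vertices of equal colour (a triangle) or a repetitively coloured path `abab`. So any
two colour classes induce a forest, which has fewer edges than vertices. Summing over the
`C(k,2)` pairs of the `k` colours actually used counts every edge once and every vertex `k - 1`
times, so `|E| ≤ (k-1)n - C(k,2)`; this bound is nondecreasing in `k` as long as `k ≤ n`. -/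

open SimpleGraph Finset

theorem SimpleGraph.IsAcyclic.card_edgeFinset_add_one_le {V : Type*} [Fintype V] [Nonempty V]
    {H : SimpleGraph V} [DecidableRel H.Adj] (hH : H.IsAcyclic) :
    #H.edgeFinset + 1 ≤ Fintype.card V := by
  classical
  obtain ⟨T, hHT, -, hT⟩ := connected_top.exists_isTree_le_of_le_of_isAcyclic le_top hH
  calc #H.edgeFinset + 1 ≤ #T.edgeFinset + 1 := by gcongr
    _ = Fintype.card V := hT.card_edgeFinset

theorem Sym2.eq_of_mem_of_ne_of_ne {α : Type*} {z : Sym2 α} {a b c : α} (ha : a ∈ z) (hb : b ∈ z)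
    (hc : c ∈ z) (hab : a ≠ b) (hbc : b ≠ c) : a = c := by
  induction z using Sym2.ind
  simp only [Sym2.mem_iff] at ha hb hc
  grind

theorem Finset.card_filter_mem_image_offDiag {α : Type*} [DecidableEq α] {K : Finset α} {a : α}
    (ha : a ∈ K) : #{z ∈ K.offDiag.image Sym2.mk.uncurry | a ∈ z} = #K - 1 := by
  have : {z ∈ K.offDiag.image Sym2.mk.uncurry | a ∈ z} = (K.erase a).map (Sym2.mkEmbedding a) := by
    ext z
    induction z using Sym2.ind
    aesop
  rw [this, card_map, card_erase_of_mem ha]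

theorem Nat.choose_two_add_sub_one_mul_le {k c n : ℕ} (hkc : k ≤ c) (hcn : c ≤ n) :
    c.choose 2 + (k - 1) * n ≤ k.choose 2 + (c - 1) * n := by
  induction c, hkc using Nat.le_induction with
  | base => omega
  | succ c hkc ih =>
    have ih := ih (by omega)
    have hchoose : (c + 1).choose 2 = c.choose 2 + c := by
      rw [Nat.choose_succ_succ', Nat.choose_one_right, add_comm]
    obtain rfl | hc := Nat.eq_zero_or_pos c
    · obtain rfl : k = 0 := by omega
      simp
    · have hmul : (c + 1 - 1) * n = (c - 1) * n + n := by
        rw [Nat.add_sub_cancel, ← Nat.succ_mul, Nat.succ_eq_add_one, Nat.sub_add_cancel hc]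
      omega

namespace NonrepetitiveColoring

variable {V α : Type*} {G : SimpleGraph V} {φ : V → α}

theorem valid (hφ : NonrepetitiveColoring G φ) {a b : V} (hab : G.Adj a b) : φ a ≠ φ b := by
  have hpath : IsPathSeq G (2 * 1) (fun k => if k = 0 then a else b) := by
    refine ⟨fun i hi => ?_, fun i j hi hj hij => ?_⟩
    · obtain rfl : i = 0 := by omega
      simpa using hab
    · interval_cases i <;> interval_cases j <;> simp_all [hab.ne]
  obtain ⟨i, hi, hne⟩ := hφ 1 one_pos _ hpath
  obtain rfl : i = 0 := by omega
  simpa using hne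

theorem isAcyclic_induce (hφ : NonrepetitiveColoring G φ) {s : Sym2 α} {T : Set V}
    (hT : ∀ v ∈ T, φ v ∈ s) : (G.induce T).IsAcyclic := by
  intro u w hw
  set x : ℕ → V := fun k => w.getVert k
  have hadj : ∀ k < w.length, G.Adj (x k) (x (k + 1)) := fun k hk => w.adj_getVert_succ hk
  have hcol : ∀ k, φ (x k) ∈ s := fun k => hT _ (w.getVert k).2
  have alternate : ∀ k, k + 2 ≤ w.length → φ (x k) = φ (x (k + 2)) := fun k hk =>
    Sym2.eq_of_mem_of_ne_of_ne (hcol k) (hcol (k + 1)) (hcol (k + 2))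
      (hφ.valid (hadj k (by omega))) (hφ.valid (hadj (k + 1) (by omega)))
  rcases hw.three_le_length.eq_or_lt with hthree | hfour
  · have hx3 : x 3 = x 0 := by simp [x, hthree]
    exact hφ.valid (hadj 2 (by omega)) (by rw [hx3, alternate 0 (by omega)])
  · have hpath : IsPathSeq G (2 * 2) x := by
      refine ⟨fun k hk => hadj k (by omega), fun k l hk hl hkl => ?_⟩
      exact hw.getVert_injOn' (by rw [Set.mem_ofPred_eq]; omega) (by rw [Set.mem_ofPred_eq]; omega) (Subtype.val_injective hkl)
    obtain ⟨i, hi, hne⟩ := hφ 2 two_pos x hpath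
    interval_cases i
    · exact hne (alternate 0 (by omega))
    · exact hne (alternate 1 (by omega))

end NonrepetitiveColoring

section Counting

variable {V α : Type*} [Fintype V] [DecidableEq α]

theorem sum_card_filter_mem_image_offDiag {φ : V → α} {K : Finset α} (hK : ∀ v, φ v ∈ K) :
    ∑ z ∈ K.offDiag.image Sym2.mk.uncurry, #{v | φ v ∈ z} = (#K - 1) * Fintype.card V := by
  calc ∑ z ∈ K.offDiag.image Sym2.mk.uncurry, #{v | φ v ∈ z}
      = ∑ v, #{z ∈ K.offDiag.image Sym2.mk.uncurry | φ v ∈ z} := by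
        simp only [card_eq_sum_ones, sum_filter]
        exact sum_comm
    _ = ∑ _v : V, (#K - 1) := sum_congr rfl fun v _ => card_filter_mem_image_offDiag (hK v)
    _ = (#K - 1) * Fintype.card V := by rw [sum_const, card_univ, smul_eq_mul, mul_comm]

theorem SimpleGraph.card_edgeFinset_eq_sum_card_filter_map_eq {G : SimpleGraph V}
    [DecidableRel G.Adj] {φ : V → α} (hφ : ∀ ⦃a b⦄, G.Adj a b → φ a ≠ φ b) {K : Finset α}
    (hK : ∀ v, φ v ∈ K) :
    #G.edgeFinset = ∑ z ∈ K.offDiag.image Sym2.mk.uncurry, #{e ∈ G.edgeFinset | e.map φ = z} :=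
  card_eq_sum_card_fiberwise fun e he => by
    induction e using Sym2.ind with
    | _ a b =>
      have he : G.Adj a b := by simpa using he
      exact mem_image_of_mem _ (mem_offDiag.mpr ⟨hK a, hK b, hφ he⟩)

end Counting

namespace NonrepetitiveColoring

variable {V α : Type*} [Fintype V] [DecidableEq V] {G : SimpleGraph V} [DecidableRel G.Adj]
  [DecidableEq α] {φ : V → α}

theorem card_filter_map_eq_add_one_le (hφ : NonrepetitiveColoring G φ) {z : Sym2 α}
    (hz : ∃ v, φ v ∈ z) : #{e ∈ G.edgeFinset | e.map φ = z} + 1 ≤ #{v | φ v ∈ z} := by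
  set S : Finset V := {v | φ v ∈ z}
  have : Nonempty S := let ⟨v, hv⟩ := hz; ⟨⟨v, by simpa [S] using hv⟩⟩
  calc #{e ∈ G.edgeFinset | e.map φ = z} + 1 ≤ #{e ∈ G.edgeFinset | e.toFinset ⊆ S} + 1 := by
        refine Nat.add_le_add_right (card_le_card fun e he => ?_) 1
        rw [mem_filter] at he ⊢
        refine ⟨he.1, fun v hv => ?_⟩
        simpa [S, ← he.2] using Sym2.mem_map.mpr ⟨v, Sym2.mem_toFinset.mp hv, rfl⟩
    _ = #(G.induce S).edgeFinset + 1 := by rw [card_filter_edgeFinset_toFinset_subset]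
    _ ≤ Fintype.card S :=
        (hφ.isAcyclic_induce (T := S) fun v hv => by simpa [S] using hv).card_edgeFinset_add_one_le
    _ = #S := Fintype.card_coe S

theorem card_edgeFinset_add_choose_two_le (hφ : NonrepetitiveColoring G φ) :
    #G.edgeFinset + (#(univ.image φ)).choose 2 ≤ (#(univ.image φ) - 1) * Fintype.card V := by
  set K := univ.image φ
  have hK : ∀ v, φ v ∈ K := fun v => mem_image_of_mem φ (mem_univ v)
  calc #G.edgeFinset + (#K).choose 2
      = ∑ z ∈ K.offDiag.image Sym2.mk.uncurry, (#{e ∈ G.edgeFinset | e.map φ = z} + 1) := by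
        rw [sum_add_distrib, ← G.card_edgeFinset_eq_sum_card_filter_map_eq (fun _ _ => hφ.valid) hK,
          ← Sym2.card_image_offDiag, sum_const, smul_eq_mul, mul_one]
    _ ≤ ∑ z ∈ K.offDiag.image Sym2.mk.uncurry, #{v | φ v ∈ z} := by
        refine sum_le_sum fun z hz => hφ.card_filter_map_eq_add_one_le ?_
        obtain ⟨⟨i, j⟩, hij, rfl⟩ := mem_image.mp hz
        obtain ⟨v, -, hv⟩ := mem_image.mp (mem_offDiag.mp hij).1
        exact ⟨v, by simp [hv]⟩
    _ = (#K - 1) * Fintype.card V := sum_card_filter_mem_image_offDiag hK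

end NonrepetitiveColoring

theorem edge_bound_of_nonrepetitive_general {V : Type*} [Fintype V] (G : SimpleGraph V)
    [DecidableRel G.Adj] (n c : ℕ) (hn : Fintype.card V = n)
    (hcn : c ≤ n)
    (h : ∃ φ : V → Fin c, NonrepetitiveColoring G φ) :
    G.edgeFinset.card ≤ (c - 1) * n - c.choose 2 := by
  classical
  subst hn
  obtain ⟨φ, hφ⟩ := h
  have hk : #(univ.image φ) ≤ c := (card_le_univ _).trans_eq (Fintype.card_fin c)
  have hcount := hφ.card_edgeFinset_add_choose_two_le
  have hmono := Nat.choose_two_add_sub_one_mul_le hk hcn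
  omega

/-- For all integers `n ≥ c ≥ 1`, every `n`-vertex graph `G` with `π(G) ≤ c`
has at most `(c-1)·n - C(c,2)` edges. -/
theorem edge_bound_of_nonrepetitive {V : Type*} [Fintype V] (G : SimpleGraph V)
    [DecidableRel G.Adj] (n c : ℕ) (hn : Fintype.card V = n)
    (hc1 : 1 ≤ c) (hcn : c ≤ n)
    (h : ∃ φ : V → Fin c, NonrepetitiveColoring G φ) :
    G.edgeFinset.card ≤ (c - 1) * n - c.choose 2 :=
  edge_bound_of_nonrepetitive_general G n c hn hcn h
end

section
/- A colouring of a graph G is walk-nonrepetitive if and only if it is stroll-nonrepetitive and a distance-2 colouring (vertices at distance at most 2 receive distinct colours). -/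
/-- `v 0, …, v (n-1)` is a walk in `G` (consecutive vertices adjacent). -/
def IsWalkSeq {V : Type*} (G : SimpleGraph V) (n : ℕ) (v : ℕ → V) : Prop :=
  ∀ i, i + 1 < n → G.Adj (v i) (v (i + 1))

/-- A colouring is walk-nonrepetitive if every repetitively coloured walk is boring. -/
def WalkNonrepetitive {V C : Type*} (G : SimpleGraph V) (φ : V → C) : Prop :=
  ∀ t : ℕ, 0 < t → ∀ v : ℕ → V, IsWalkSeq G (2 * t) v →
    (∀ i < t, φ (v i) = φ (v (t + i))) → ∀ i < t, v i = v (t + i)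

/-- A colouring is stroll-nonrepetitive if no stroll (a walk `(v 0,…,v (2t-1))`
with `v i ≠ v (t+i)` for all `i < t`) is repetitively coloured. -/
def StrollNonrepetitive {V C : Type*} (G : SimpleGraph V) (φ : V → C) : Prop :=
  ∀ t : ℕ, 0 < t → ∀ v : ℕ → V, IsWalkSeq G (2 * t) v →
    (∀ i < t, v i ≠ v (t + i)) → ∃ i < t, φ (v i) ≠ φ (v (t + i))

/-- A distance-2 colouring: distinct vertices at distance at most 2 get distinct colours. -/
def Distance2Coloring {V C : Type*} (G : SimpleGraph V) (φ : V → C) : Prop :=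
  ∀ u w : V, u ≠ w → (G.Adj u w ∨ ∃ x, G.Adj u x ∧ G.Adj x w) → φ u ≠ φ w

/-- A colouring of a graph is walk-nonrepetitive if and only if it is
stroll-nonrepetitive and distance-2. -/
theorem walkNonrepetitive_iff {V C : Type*} (G : SimpleGraph V) (φ : V → C) :
    WalkNonrepetitive G φ ↔ StrollNonrepetitive G φ ∧ Distance2Coloring G φ := by
  constructor
  · intro h
    constructor
    · intro t ht v hw hne
      by_contra hc
      push_neg at hc
      exact hne 0 ht (h t ht v hw hc 0 ht)
    · intro u w huw hdist hφ
      rcases hdist with hadj | ⟨x, hux, hxw⟩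
      · have := h 1 one_pos (fun i => if i = 0 then u else w)
          (by intro i hi; have : i = 0 := (by omega); simp [this, hadj])
          (by intro i hi; have : i = 0 := (by omega); simp [this, hφ]) 0 one_pos
        simp at this
        exact huw this
      · have := h 2 two_pos (fun i => if i = 0 then u else if i = 2 then w else x)
          (by
            intro i hi
            have hi' : i < 3 := by omega
            interval_cases i <;> simp [hux, hxw, hxw.symm])
          (by
            intro i hi
            have hi' : i < 2 := hi
            interval_cases i <;> simp [hφ]) 0 two_pos
        simp at this
        exact huw this
  · rintro ⟨hs, hd⟩ t ht v hw hcol i hi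
    have step : ∀ j, j + 1 < t → (v j = v (t + j) ↔ v (j + 1) = v (t + j + 1)) := by
      intro j hj
      have a1 : G.Adj (v j) (v (j + 1)) := hw j (by omega)
      have a2 : G.Adj (v (t + j)) (v (t + j + 1)) := hw (t + j) (by omega)
      constructor
      · intro he
        by_contra hne
        exact hd _ _ hne (Or.inr ⟨v j, a1.symm, by rw [he]; exact a2⟩)
          (hcol (j + 1) hj)
      · intro he
        by_contra hne
        exact hd _ _ hne (Or.inr ⟨v (j + 1), a1, by rw [he]; exact a2.symm⟩)
          (hcol j (by omega))
    have const : ∀ j, j < t → (v j = v (t + j) ↔ v 0 = v (t + 0)) := by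
      intro j
      induction j with
      | zero => intro _; exact Iff.rfl
      | succ n ih => intro hn; exact (step n (by omega)).symm.trans (ih (by omega))
    by_contra hne
    have hall : ∀ j, j < t → v j ≠ v (t + j) := by
      intro j hj he
      exact hne ((const i hi).mpr ((const j hj).mp he))
    obtain ⟨j, hj, hφj⟩ := hs t ht v hw hall
    exact hφj (hcol j hj)
end

section
/- If a coloured graph contains a repetitively coloured non-boring walk, then it contains a repetitively coloured non-boring walk whose set of vertices has size k and whose length is at most 2k², where k is the minimum number of distinct vertices over all repetitively coloured non-boring walks. -/
/-- `(v 0, …, v (2t-1))` is a repetitively coloured non-boring walk in `G`. -/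
def RepetitiveNonboringWalk {V C : Type*} (G : SimpleGraph V) (φ : V → C)
    (t : ℕ) (v : ℕ → V) : Prop :=
  0 < t ∧ IsWalkSeq G (2 * t) v ∧ (∀ i < t, φ (v i) = φ (v (t + i))) ∧
    ∃ i < t, v i ≠ v (t + i)

/-- The order of the walk `(v 0, …, v (2t-1))`: its number of distinct vertices. -/
def walkOrder {V : Type*} [DecidableEq V] (t : ℕ) (v : ℕ → V) : ℕ :=
  ((Finset.range (2 * t)).image v).card

/-!
Among the repetitively coloured non-boring walks of minimum order `k`, take one of minimum
length `2t`. If `t > k²`, two of the `t` pairs `(v i, v (t + i))` coincide, say at `i < j`.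
Deleting the closed subwalks `v i … v j` and `v (t+i) … v (t+j)` leaves a shorter repetitively
coloured walk on a subset of the vertices. If it is boring, every non-matching pair of the
original walk lies at an index in `[i, j)`, so the walk `v i … v (j-1)` followed by
`v (t+i) … v (t+j-1)` is repetitively coloured, non-boring, and shorter. Either way the new walk
has order at most, hence exactly, `k`, contradicting the minimality of `t`.
-/

open Finset

def cutSeq {α : Type*} (v : ℕ → α) (i j : ℕ) : ℕ → α :=
  fun r => if r < i then v r else v (r + (j - i))

section cutSeq

variable {α : Type*} {v : ℕ → α} {i j r : ℕ}

lemma cutSeq_of_lt (h : r < i) : cutSeq v i j r = v r := if_pos h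

lemma cutSeq_of_le (h : i ≤ r) : cutSeq v i j r = v (r + (j - i)) := if_neg (by omega)

lemma image_cutSeq_subset [DecidableEq α] (n : ℕ) :
    (range (n - (j - i))).image (cutSeq v i j) ⊆ (range n).image v := by
  intro x hx
  simp only [mem_image, mem_range] at hx ⊢
  obtain ⟨r, hr, rfl⟩ := hx
  rcases lt_or_ge r i with h | h
  · exact ⟨r, by omega, (cutSeq_of_lt h).symm⟩
  · exact ⟨r + (j - i), by omega, (cutSeq_of_le h).symm⟩

lemma image_shift_subset [DecidableEq α] (n : ℕ) :
    (range (n - i)).image (fun r => v (i + r)) ⊆ (range n).image v := by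
  intro x hx
  simp only [mem_image, mem_range] at hx ⊢
  obtain ⟨r, hr, rfl⟩ := hx
  exact ⟨i + r, by omega, rfl⟩

end cutSeq

section IsWalkSeq

variable {V : Type*} {G : SimpleGraph V} {n : ℕ} {v : ℕ → V}

lemma IsWalkSeq.mono {m : ℕ} (h : IsWalkSeq G n v) (hmn : m ≤ n) : IsWalkSeq G m v :=
  fun r hr => h r (by omega)

lemma IsWalkSeq.shift (h : IsWalkSeq G n v) (i : ℕ) :
    IsWalkSeq G (n - i) (fun r => v (i + r)) :=
  fun r hr => h (i + r) (by omega)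

lemma IsWalkSeq.cutSeq {i j : ℕ} (h : IsWalkSeq G n v) (hij : v i = v j) :
    IsWalkSeq G (n - (j - i)) (cutSeq v i j) := by
  intro r hr
  rcases lt_trichotomy (r + 1) i with hri | hri | hri
  · rw [cutSeq_of_lt (by omega), cutSeq_of_lt hri]
    exact h r (by omega)
  · have hjoin : v (r + 1 + (j - i)) = v (r + 1) := by
      rcases le_total i j with hle | hle
      · rw [show r + 1 + (j - i) = j by omega, ← hij, hri]
      · rw [show j - i = 0 by omega, add_zero]
    rw [cutSeq_of_lt (by omega), cutSeq_of_le hri.ge, hjoin]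
    exact h r (by omega)
  · rw [cutSeq_of_le (by omega), cutSeq_of_le (by omega), add_right_comm]
    exact h (r + (j - i)) (by omega)

end IsWalkSeq

/-- The walk `(v 0, …, v (2t-1))` with the terms at indices in `[i, j)` removed from both
halves. -/
def removePairs {α : Type*} (v : ℕ → α) (t i j : ℕ) : ℕ → α :=
  cutSeq (cutSeq v (t + i) (t + j)) i j

section removePairs

variable {α : Type*} {v : ℕ → α} {t i j : ℕ}

lemma removePairs_apply (hjt : j ≤ t) {r : ℕ} (hr : r < t - (j - i)) :
    removePairs v t i j r = v (cutSeq id i j r) ∧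
      removePairs v t i j (t - (j - i) + r) = v (t + cutSeq id i j r) := by
  simp only [removePairs, cutSeq, id]
  constructor <;> split_ifs <;> first | omega | (congr 1 <;> omega)

lemma exists_removePairs_eq (hjt : j ≤ t) {r : ℕ} (hr : r < t - (j - i)) :
    ∃ s < t, removePairs v t i j r = v s ∧ removePairs v t i j (t - (j - i) + r) = v (t + s) :=
  ⟨cutSeq id i j r, by simp only [cutSeq, id]; split_ifs <;> omega,
    removePairs_apply hjt hr⟩

lemma exists_eq_removePairs (hjt : j ≤ t) {s : ℕ} (hst : s < t) (hs : s < i ∨ j ≤ s) :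
    ∃ r < t - (j - i), removePairs v t i j r = v s ∧
      removePairs v t i j (t - (j - i) + r) = v (t + s) := by
  rcases hs with hs | hs
  · refine ⟨s, by omega, ?_⟩
    simpa only [cutSeq_of_lt hs, id] using removePairs_apply (v := v) (i := i) (r := s) hjt (by omega)
  · refine ⟨s - (j - i), by omega, ?_⟩
    have hcut : cutSeq id i j (s - (j - i)) = s := by simp only [cutSeq, id]; split_ifs <;> omega
    simpa only [hcut] using removePairs_apply (v := v) (i := i) (r := s - (j - i)) hjt (by omega)

lemma IsWalkSeq.removePairs {V : Type*} {G : SimpleGraph V} {v : ℕ → V}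
    (h : IsWalkSeq G (2 * t) v) (hjt : j < t) (h₁ : v i = v j) (h₂ : v (t + i) = v (t + j)) :
    IsWalkSeq G (2 * (t - (j - i))) (removePairs v t i j) := by
  have hcut := h.cutSeq h₂
  have hij : _root_.cutSeq v (t + i) (t + j) i = _root_.cutSeq v (t + i) (t + j) j := by
    rw [cutSeq_of_lt (by omega), cutSeq_of_lt (by omega), h₁]
  exact (hcut.cutSeq hij).mono (by omega)

lemma walkOrder_removePairs_le [DecidableEq α] (hjt : j ≤ t) :
    walkOrder (t - (j - i)) (removePairs v t i j) ≤ walkOrder t v := by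
  have hlen : 2 * (t - (j - i)) = 2 * t - (t + j - (t + i)) - (j - i) := by omega
  unfold walkOrder
  rw [hlen]
  exact card_le_card ((image_cutSeq_subset _).trans (image_cutSeq_subset _))

end removePairs

section RepetitiveNonboringWalk

variable {V C : Type*} {G : SimpleGraph V} {φ : V → C} {t : ℕ} {v : ℕ → V} {i j : ℕ}

/-- The walk `v i, …, v (j-1), v (t+i), …, v (t+j-1)`. -/
lemma repetitiveNonboringWalk_segment (hwalk : IsWalkSeq G (2 * t) v)
    (hcol : ∀ s < t, φ (v s) = φ (v (t + s))) (hjt : j ≤ t) (hjoin : v j = v (t + i))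
    (hnb : ∃ s, i ≤ s ∧ s < j ∧ v s ≠ v (t + s)) :
    RepetitiveNonboringWalk G φ (j - i) (cutSeq (fun r => v (i + r)) (j - i) t) := by
  have hsnd : ∀ r, cutSeq (fun r => v (i + r)) (j - i) t (j - i + r) = v (t + (i + r)) := by
    intro r
    rw [cutSeq_of_le (by omega)]
    congr 1
    omega
  obtain ⟨s, his, hsj, hne⟩ := hnb
  refine ⟨by omega, ?_, fun r hr => ?_, s - i, by omega, ?_⟩
  · have hv : (fun r => v (i + r)) (j - i) = (fun r => v (i + r)) t := by
      simp only [Nat.add_sub_cancel' (by omega : i ≤ j), hjoin, add_comm i t]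
    exact ((hwalk.shift i).cutSeq hv).mono (by omega)
  · rw [hsnd, cutSeq_of_lt hr]
    exact hcol (i + r) (by omega)
  · rwa [hsnd, cutSeq_of_lt (by omega), Nat.add_sub_cancel' his]

lemma walkOrder_segment_le [DecidableEq V] (hjt : j ≤ t) :
    walkOrder (j - i) (cutSeq (fun r => v (i + r)) (j - i) t) ≤ walkOrder t v := by
  unfold walkOrder
  calc _ ≤ ((range (2 * t - i - (t - (j - i)))).image
          (cutSeq (fun r => v (i + r)) (j - i) t)).card :=
        card_le_card (image_subset_image (range_subset_range.2 (by omega)))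
    _ ≤ _ := card_le_card ((image_cutSeq_subset _).trans (image_shift_subset _))

lemma RepetitiveNonboringWalk.exists_shorter [DecidableEq V]
    (hv : RepetitiveNonboringWalk G φ t v) (hij : i < j) (hjt : j < t)
    (h₁ : v i = v j) (h₂ : v (t + i) = v (t + j)) :
    ∃ s u, RepetitiveNonboringWalk G φ s u ∧ s < t ∧ walkOrder s u ≤ walkOrder t v := by
  obtain ⟨-, hwalk, hcol, s, hst, hne⟩ := hv
  by_cases hbor : ∃ r < t - (j - i),
      removePairs v t i j r ≠ removePairs v t i j (t - (j - i) + r)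
  · refine ⟨t - (j - i), removePairs v t i j, ⟨by omega, hwalk.removePairs hjt h₁ h₂,
      fun r hr => ?_, hbor⟩, by omega, walkOrder_removePairs_le hjt.le⟩
    obtain ⟨s, hs, e₁, e₂⟩ := exists_removePairs_eq (v := v) hjt.le hr
    rw [e₁, e₂]
    exact hcol s hs
  · push Not at hbor
    have hpair : ∀ s < t, s < i ∨ j ≤ s → v s = v (t + s) := by
      intro s hs hout
      obtain ⟨r, hr, e₁, e₂⟩ := exists_eq_removePairs (v := v) hjt.le hs hout
      rw [← e₁, ← e₂]
      exact hbor r hr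
    have hjoin : v j = v (t + i) := (hpair j hjt (Or.inr le_rfl)).trans h₂.symm
    have hsi : i ≤ s := by_contra fun h => hne (hpair s hst (Or.inl (by omega)))
    have hsj : s < j := by_contra fun h => hne (hpair s hst (Or.inr (by omega)))
    exact ⟨j - i, _, repetitiveNonboringWalk_segment hwalk hcol hjt.le hjoin ⟨s, hsi, hsj, hne⟩,
      by omega, walkOrder_segment_le hjt.le⟩

end RepetitiveNonboringWalk

lemma exists_pair_eq_of_walkOrder_sq_lt {V : Type*} [DecidableEq V] {t : ℕ} {v : ℕ → V}
    (h : walkOrder t v ^ 2 < t) :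
    ∃ i j, i < j ∧ j < t ∧ v i = v j ∧ v (t + i) = v (t + j) := by
  set S := (range (2 * t)).image v
  have hmaps : ∀ a ∈ range t, (v a, v (t + a)) ∈ S ×ˢ S := by
    intro a ha
    rw [mem_range] at ha
    exact mem_product.2 ⟨mem_image_of_mem v (mem_range.2 (by omega)),
      mem_image_of_mem v (mem_range.2 (by omega))⟩
  have hcard : (S ×ˢ S).card < (range t).card := by
    rwa [card_product, card_range, ← sq]
  obtain ⟨a, ha, b, hb, hab, heq⟩ := exists_ne_map_eq_of_card_lt_of_maps_to hcard hmaps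
  rw [mem_range] at ha hb
  obtain ⟨e₁, e₂⟩ := Prod.mk.inj heq
  rcases lt_or_gt_of_ne hab with hlt | hlt
  · exact ⟨a, b, hlt, hb, e₁, e₂⟩
  · exact ⟨b, a, hlt, ha, e₁.symm, e₂.symm⟩

/-- If a coloured graph contains a repetitively coloured non-boring walk, and `k` is the
minimum order of such a walk, then there is one of order `k` and length at most `2k²`. -/
theorem short_repetitive_nonboring_walk {V C : Type*} [DecidableEq V]
    (G : SimpleGraph V) (φ : V → C) (k : ℕ)
    (hex : ∃ t v, RepetitiveNonboringWalk G φ t v ∧ walkOrder t v = k)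
    (hmin : ∀ t v, RepetitiveNonboringWalk G φ t v → k ≤ walkOrder t v) :
    ∃ t v, RepetitiveNonboringWalk G φ t v ∧ walkOrder t v = k ∧ 2 * t ≤ 2 * k ^ 2 := by
  classical
  obtain ⟨v, hv, hvk⟩ := Nat.find_spec hex
  refine ⟨Nat.find hex, v, hv, hvk, ?_⟩
  by_contra! hlong
  obtain ⟨i, j, hij, hjt, h₁, h₂⟩ := exists_pair_eq_of_walkOrder_sq_lt (by rw [hvk]; omega)
  obtain ⟨s, u, hu, hst, hsu⟩ := hv.exists_shorter hij hjt h₁ h₂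
  exact Nat.find_min hex hst ⟨u, hu, le_antisymm (hvk ▸ hsu) (hmin s u hu)⟩
end

section
/- Every walk-nonrepetitive colouring of a graph is nonrepetitive on non-boring lazy walks: if a lazy walk (v_1,...,v_{2t}) is repetitively coloured, then v_i = v_{t+i} for all i ∈ {1,...,t}. -/
/-- `v 0, …, v (n-1)` is a lazy walk in `G`: consecutive vertices touch
(are equal or adjacent). -/
def IsLazyWalkSeq {V : Type*} (G : SimpleGraph V) (n : ℕ) (v : ℕ → V) : Prop :=
  ∀ i, i + 1 < n → v i = v (i + 1) ∨ G.Adj (v i) (v (i + 1))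

/-- The `j`-th natural number different from `k`, the analogue of `Fin.succAbove` on `ℕ`. -/
def Nat.succAbove (k j : ℕ) : ℕ := if j < k then j else j + 1

namespace Nat

theorem succAbove_of_lt {k j : ℕ} (h : j < k) : succAbove k j = j := if_pos h

theorem succAbove_of_le {k j : ℕ} (h : k ≤ j) : succAbove k j = j + 1 := if_neg (not_lt.2 h)

theorem exists_succAbove_eq {k i : ℕ} (h : i ≠ k) : ∃ j, succAbove k j = i := by
  rcases lt_or_gt_of_ne h with h | h
  · exact ⟨i, succAbove_of_lt h⟩
  · exact ⟨i - 1, by rw [succAbove_of_le (by omega)]; omega⟩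

end Nat

open Nat (succAbove)

section

variable {V C : Type*} {G : SimpleGraph V}

def IsRepetitive (φ : V → C) (t : ℕ) (v : ℕ → V) : Prop :=
  ∀ i < t, φ (v i) = φ (v (t + i))

def IsBoring (t : ℕ) (v : ℕ → V) : Prop :=
  ∀ i < t, v i = v (t + i)

/-- For `k ≤ t`, the sequence `v 0, …, v (2t+1)` with the positions `k` and `t + 1 + k`
deleted. -/
def dropPair (t k : ℕ) (v : ℕ → V) : ℕ → V :=
  v ∘ succAbove (t + 1 + k) ∘ succAbove k

theorem dropPair_apply_of_lt {t k j : ℕ} (v : ℕ → V) (hj : j < t) :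
    dropPair t k v j = v (succAbove k j) := by
  simp only [dropPair, Function.comp_apply]
  congr 1
  unfold succAbove; split_ifs <;> omega

theorem dropPair_apply_add {t k j : ℕ} (v : ℕ → V) (hk : k ≤ t) (hj : j < t) :
    dropPair t k v (t + j) = v (t + 1 + succAbove k j) := by
  simp only [dropPair, Function.comp_apply]
  congr 1
  unfold succAbove; split_ifs <;> omega

theorem IsRepetitive.dropPair {φ : V → C} {t k : ℕ} {v : ℕ → V} (hk : k ≤ t)
    (h : IsRepetitive φ (t + 1) v) : IsRepetitive φ t (dropPair t k v) := by
  intro j hj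
  rw [dropPair_apply_of_lt v hj, dropPair_apply_add v hk hj]
  exact h _ (by unfold succAbove; split_ifs <;> omega)

theorem IsBoring.of_dropPair {t k : ℕ} {v : ℕ → V} (hk : k ≤ t)
    (h : IsBoring t (dropPair t k v)) : ∀ i < t + 1, i ≠ k → v i = v (t + 1 + i) := by
  intro i hi hik
  obtain ⟨j, rfl⟩ := Nat.exists_succAbove_eq hik
  have hj : j < t := by unfold succAbove at hi; split_ifs at hi <;> omega
  simpa only [dropPair_apply_of_lt v hj, dropPair_apply_add v hk hj] using h j hj

theorem IsLazyWalkSeq.isWalkSeq {n : ℕ} {v : ℕ → V} (hv : IsLazyWalkSeq G n v)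
    (hne : ∀ i, i + 1 < n → v i ≠ v (i + 1)) : IsWalkSeq G n v :=
  fun i hi => (hv i hi).resolve_left (hne i hi)

theorem IsLazyWalkSeq.comp_succAbove {n k : ℕ} {v : ℕ → V} (hv : IsLazyWalkSeq G (n + 1) v)
    (hk : 0 < k → k < n → v (k - 1) = v k ∨ v k = v (k + 1)) :
    IsLazyWalkSeq G n (v ∘ succAbove k) := by
  intro p hp
  simp only [Function.comp_apply]
  rcases lt_trichotomy (p + 1) k with hpk | rfl | hpk
  · rw [Nat.succAbove_of_lt hpk, Nat.succAbove_of_lt (by omega)]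
    exact hv p (by omega)
  · rw [Nat.succAbove_of_lt (by omega), Nat.succAbove_of_le le_rfl]
    rcases hk (by omega) (by omega) with hstay | hstay
    · rw [Nat.add_sub_cancel] at hstay
      exact hstay ▸ hv (p + 1) (by omega)
    · exact hstay ▸ hv p (by omega)
  · rw [Nat.succAbove_of_le (by omega), Nat.succAbove_of_le (by omega)]
    exact hv (p + 1) (by omega)

theorem IsLazyWalkSeq.dropPair {t k : ℕ} {v : ℕ → V} (hv : IsLazyWalkSeq G (2 * (t + 1)) v)
    (hleft : 0 < k → v (k - 1) = v k ∨ v k = v (k + 1))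
    (hright : k < t → v (t + k) = v (t + 1 + k) ∨ v (t + 1 + k) = v (t + 1 + k + 1)) :
    IsLazyWalkSeq G (2 * t) (dropPair t k v) := by
  have hv' : IsLazyWalkSeq G (2 * t + 1 + 1) v := hv
  refine (hv'.comp_succAbove fun _ hk => ?_).comp_succAbove fun hk hkt => ?_
  · simpa [Nat.add_sub_cancel] using hright (by omega)
  · simp only [Function.comp_apply, Nat.succAbove_of_lt (show k < t + 1 + k by omega),
      Nat.succAbove_of_lt (show k - 1 < t + 1 + k by omega),
      Nat.succAbove_of_lt (show k + 1 < t + 1 + k by omega)]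
    exact hleft hk

namespace WalkNonrepetitive

variable {φ : V → C}

theorem ne_of_adj (h : WalkNonrepetitive G φ) {a b : V} (hab : G.Adj a b) : φ a ≠ φ b := by
  intro hφ
  have hwalk : IsWalkSeq G (2 * 1) (fun j => if j = 0 then a else b) := by
    intro i hi
    obtain rfl : i = 0 := by omega
    simpa using hab
  have hba : a = b := by simpa using h 1 one_pos _ hwalk (by simpa using hφ) 0 one_pos
  exact G.loopless.irrefl a (hba ▸ hab)

theorem eq_of_touch (h : WalkNonrepetitive G φ) {a b : V} (hab : a = b ∨ G.Adj a b)
    (hφ : φ a = φ b) : a = b :=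
  hab.resolve_right fun hadj => h.ne_of_adj hadj hφ

theorem stay_iff (h : WalkNonrepetitive G φ) {t i : ℕ} {v : ℕ → V}
    (hv : IsLazyWalkSeq G (2 * t) v) (hrep : IsRepetitive φ t v) (hi : i + 1 < t) :
    v i = v (i + 1) ↔ v (t + i) = v (t + i + 1) := by
  have hφ : φ (v i) = φ (v (i + 1)) ↔ φ (v (t + i)) = φ (v (t + i + 1)) := by
    rw [hrep i (by omega), hrep (i + 1) hi, ← Nat.add_assoc]
  constructor
  · exact fun hstay => h.eq_of_touch (hv (t + i) (by omega)) (hφ.1 (congrArg φ hstay))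
  · exact fun hstay => h.eq_of_touch (hv i (by omega)) (hφ.2 (congrArg φ hstay))

variable {s : ℕ} {v : ℕ → V}

theorem isBoring_of_stay (h : WalkNonrepetitive G φ)
    (ih : ∀ w, IsLazyWalkSeq G (2 * s) w → IsRepetitive φ s w → IsBoring s w)
    (hv : IsLazyWalkSeq G (2 * (s + 1)) v) (hrep : IsRepetitive φ (s + 1) v) {i : ℕ}
    (hi : i + 1 < s + 1) (hvi : v i = v (i + 1)) : IsBoring (s + 1) v := by
  have hvti := (h.stay_iff hv hrep hi).1 hvi
  have hw := hv.dropPair (fun _ => .inr hvi) fun _ => .inr hvti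
  have hdrop := (ih _ hw (hrep.dropPair (by omega))).of_dropPair (by omega)
  intro j hj
  rcases eq_or_ne j i with rfl | hji
  · rw [hvi, hdrop (j + 1) hi (by omega), ← Nat.add_assoc, ← hvti]
  · exact hdrop j hj hji

theorem isBoring_of_middle_stay
    (ih : ∀ w, IsLazyWalkSeq G (2 * s) w → IsRepetitive φ s w → IsBoring s w)
    (hv : IsLazyWalkSeq G (2 * (s + 1)) v) (hrep : IsRepetitive φ (s + 1) v)
    (hmid : v s = v (s + 1)) : IsBoring (s + 1) v := by
  obtain rfl | hs := eq_or_ne s 0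
  · intro i hi
    obtain rfl : i = 0 := by omega
    exact hmid
  have hw_last : IsLazyWalkSeq G (2 * s) (dropPair s s v) :=
    hv.dropPair (fun _ => .inr hmid) fun hs => absurd hs (lt_irrefl s)
  have hw_first : IsLazyWalkSeq G (2 * s) (dropPair s 0 v) :=
    hv.dropPair (fun h0 => absurd h0 (lt_irrefl 0)) fun _ => .inl (by simpa using hmid)
  intro i hi
  rcases eq_or_ne i s with rfl | his
  · exact (ih _ hw_first (hrep.dropPair (by omega))).of_dropPair (by omega) i hi hs
  · exact (ih _ hw_last (hrep.dropPair le_rfl)).of_dropPair le_rfl i hi his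

theorem isWalkSeq_of_forall_ne (h : WalkNonrepetitive G φ)
    (hv : IsLazyWalkSeq G (2 * (s + 1)) v) (hrep : IsRepetitive φ (s + 1) v)
    (hstay : ∀ i, i + 1 < s + 1 → v i ≠ v (i + 1)) (hmid : v s ≠ v (s + 1)) :
    IsWalkSeq G (2 * (s + 1)) v := by
  refine hv.isWalkSeq fun i hi => ?_
  rcases lt_trichotomy (i + 1) (s + 1) with hi' | hi' | hi'
  · exact hstay i hi'
  · obtain rfl : i = s := by omega
    exact hmid
  · obtain ⟨j, rfl⟩ : ∃ j, i = s + 1 + j := ⟨i - (s + 1), by omega⟩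
    exact fun hvj => hstay j (by omega) ((h.stay_iff hv hrep (by omega)).2 hvj)

theorem isBoring_of_isLazyWalkSeq (h : WalkNonrepetitive G φ) :
    ∀ t v, IsLazyWalkSeq G (2 * t) v → IsRepetitive φ t v → IsBoring t v := by
  intro t
  induction t using Nat.strong_induction_on with
  | _ t ih =>
  intro v hv hrep
  obtain _ | s := t
  · exact fun i hi => absurd hi (Nat.not_lt_zero i)
  have ih' := ih s s.lt_succ_self
  by_cases hstay : ∃ i, i + 1 < s + 1 ∧ v i = v (i + 1)
  · obtain ⟨i, hi, hvi⟩ := hstay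
    exact h.isBoring_of_stay ih' hv hrep hi hvi
  push Not at hstay
  by_cases hmid : v s = v (s + 1)
  · exact isBoring_of_middle_stay ih' hv hrep hmid
  · exact h (s + 1) s.succ_pos v (h.isWalkSeq_of_forall_ne hv hrep hstay hmid) hrep

end WalkNonrepetitive

end

/-- Every walk-nonrepetitive colouring is nonrepetitive on non-boring lazy walks:
every repetitively coloured lazy walk is boring. -/
theorem walkNonrepetitive_lazy {V C : Type*} (G : SimpleGraph V) (φ : V → C)
    (h : WalkNonrepetitive G φ) :
    ∀ t : ℕ, 0 < t → ∀ v : ℕ → V, IsLazyWalkSeq G (2 * t) v →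
      (∀ i < t, φ (v i) = φ (v (t + i))) → ∀ i < t, v i = v (t + i) := by
  intro t _ v hv hrep
  exact h.isBoring_of_isLazyWalkSeq t v hv hrep
end

section
/- Every stroll-nonrepetitive colouring of a graph is nonrepetitive on lazy strolls: if (v_1,...,v_{2t}) is a lazy walk with φ(v_i)=φ(v_{t+i}) for all i ∈ {1,...,t}, then v_i = v_{t+i} for some i ∈ {1,...,t}. -/
/-- Every stroll-nonrepetitive colouring is nonrepetitive on lazy strolls: if a lazy
walk `(v 0,…,v (2t-1))` is repetitively coloured, then `v i = v (t+i)` for some `i < t`. -/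
theorem strollNonrepetitive_lazy {V C : Type*} (G : SimpleGraph V) (φ : V → C)
    (h : StrollNonrepetitive G φ) :
    ∀ t : ℕ, 0 < t → ∀ v : ℕ → V, IsLazyWalkSeq G (2 * t) v →
      (∀ i < t, φ (v i) = φ (v (t + i))) → ∃ i < t, v i = v (t + i) := by
  -- colours of adjacent vertices differ
  have hne : ∀ a b : V, G.Adj a b → φ a ≠ φ b := by
    intro a b hab hφ
    obtain ⟨i, hi, hiφ⟩ := h 1 one_pos (fun k => if k = 0 then a else b)
      (by intro i hi; have h0 : i = 0 := (by omega); subst h0; simpa using hab)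
      (by intro i hi; have h0 : i = 0 := (by omega); subst h0; simpa using hab.ne)
    have : i = 0 := by omega
    subst this
    simp only [if_pos rfl] at hiφ
    exact hiφ (by simpa using hφ)
  intro t
  induction t with
  | zero => intro h0; exact absurd h0 (by omega)
  | succ n IH =>
    intro _ v hlazy hcol
    by_contra hc
    push_neg at hc
    -- hc : ∀ i < n + 1, v i ≠ v (n + 1 + i)
    by_cases hw : ∀ i, i + 1 < 2 * (n + 1) → v i ≠ v (i + 1)
    · -- no lazy step: it is a genuine stroll, contradiction
      have hwalk : IsWalkSeq G (2 * (n + 1)) v := by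
        intro i hi
        rcases hlazy i hi with he | ha
        · exact absurd he (hw i hi)
        · exact ha
      obtain ⟨i, hi, hiφ⟩ := h (n + 1) (Nat.succ_pos n) v hwalk hc
      exact hiφ (hcol i hi)
    · push_neg at hw
      obtain ⟨j0, hj0lt, hj0eq⟩ := hw
      -- normalize the lazy step into the first half
      have key : ∃ j, j < n + 1 ∧ v j = v (j + 1) := by
        by_cases hjt : j0 < n + 1
        · exact ⟨j0, hjt, hj0eq⟩
        · refine ⟨j0 - (n + 1), by omega, ?_⟩
          by_contra hne'
          have hadj : G.Adj (v (j0 - (n + 1))) (v (j0 - (n + 1) + 1)) := by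
            rcases hlazy (j0 - (n + 1)) (by omega) with he | ha
            · exact absurd he hne'
            · exact ha
          apply hne _ _ hadj
          have e1 := hcol (j0 - (n + 1)) (by omega)
          rw [show n + 1 + (j0 - (n + 1)) = j0 by omega] at e1
          have e2 := hcol (j0 - (n + 1) + 1) (by omega)
          rw [show n + 1 + (j0 - (n + 1) + 1) = j0 + 1 by omega] at e2
          rw [e1, e2, hj0eq]
      obtain ⟨j, hjt, hjeq⟩ := key
      by_cases hjn : j < n
      · -- j ≤ n - 1 : look at the matched pair in the second half
        rcases hlazy (n + 1 + j) (by omega) with he2 | ha2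
        · -- both lazy: shorten to a lazy stroll of length 2 n
          have hn : 0 < n := by omega
          set u : ℕ → V := fun k =>
            if k < n then (if k ≤ j then v k else v (k + 1))
            else (if k - n ≤ j then v (n + 1 + (k - n)) else v (n + 1 + (k - n) + 1))
            with hu
          have hufst : ∀ k, k < n → k ≤ j → u k = v k := by
            intro k h1 h2
            simp only [hu]
            rw [if_pos h1, if_pos h2]
          have hufst2 : ∀ k, k < n → j < k → u k = v (k + 1) := by
            intro k h1 h2
            simp only [hu]
            rw [if_pos h1, if_neg (by omega : ¬ k ≤ j)]
          have husnd : ∀ k, k ≤ j → u (n + k) = v (n + 1 + k) := by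
            intro k h2
            simp only [hu, Nat.add_sub_cancel_left]
            rw [if_neg (by omega : ¬ n + k < n), if_pos h2]
          have husnd2 : ∀ k, j < k → u (n + k) = v (n + 1 + k + 1) := by
            intro k h2
            simp only [hu, Nat.add_sub_cancel_left]
            rw [if_neg (by omega : ¬ n + k < n), if_neg (by omega : ¬ k ≤ j)]
          have hulazy : IsLazyWalkSeq G (2 * n) u := by
            intro i hi
            by_cases h1 : i + 1 < n
            · -- inside first half
              by_cases h2 : i + 1 ≤ j
              · rw [hufst i (by omega) (by omega), hufst (i + 1) h1 h2]
                exact hlazy i (by omega)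
              · by_cases h3 : i ≤ j
                · -- i = j
                  have hij : i = j := by omega
                  rw [hufst i (by omega) h3, hufst2 (i + 1) h1 (by omega), hij, hjeq]
                  exact hlazy (j + 1) (by omega)
                · rw [hufst2 i (by omega) (by omega), hufst2 (i + 1) h1 (by omega)]
                  exact hlazy (i + 1) (by omega)
            · by_cases h4 : i < n
              · -- junction : i = n - 1, i + 1 = n
                have hin : i + 1 = n := by omega
                have hun : u (i + 1) = v (n + 1) := by
                  have e := husnd 0 (by omega)
                  rw [show n + 0 = n by omega, show n + 1 + 0 = n + 1 by omega] at e
                  rw [hin]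
                  exact e
                by_cases h3 : i ≤ j
                · -- j = n - 1 = i
                  have hij : i = j := by omega
                  rw [hufst i h4 h3, hun, hij, hjeq]
                  have := hlazy n (by omega)
                  rw [show j + 1 = n by omega]
                  exact this
                · rw [hufst2 i h4 (by omega), hun, show i + 1 = n by omega]
                  exact hlazy n (by omega)
              · -- inside second half
                have hm : n + (i - n) = i := by omega
                have hm1 : n + (i - n + 1) = i + 1 := by omega
                by_cases h2 : i - n + 1 ≤ j
                · have e1 := husnd (i - n) (by omega)
                  have e2 := husnd (i - n + 1) h2
                  rw [hm] at e1
                  rw [hm1] at e2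
                  rw [e1, e2]
                  have := hlazy (n + 1 + (i - n)) (by omega)
                  rw [show n + 1 + (i - n) + 1 = n + 1 + (i - n + 1) by omega] at this
                  exact this
                · by_cases h3 : i - n ≤ j
                  · -- i - n = j
                    have hij : i - n = j := by omega
                    have e1 := husnd (i - n) h3
                    have e2 := husnd2 (i - n + 1) (by omega)
                    rw [hm] at e1
                    rw [hm1] at e2
                    rw [e1, e2, hij, he2]
                    have := hlazy (n + 1 + j + 1) (by omega)
                    rw [show n + 1 + j + 1 + 1 = n + 1 + (j + 1) + 1 by omega] at this
                    exact this
                  · have e1 := husnd2 (i - n) (by omega)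
                    have e2 := husnd2 (i - n + 1) (by omega)
                    rw [hm] at e1
                    rw [hm1] at e2
                    rw [e1, e2]
                    have := hlazy (n + 1 + (i - n) + 1) (by omega)
                    rw [show n + 1 + (i - n) + 1 + 1 = n + 1 + (i - n + 1) + 1 by omega]
                      at this
                    exact this
          have hucol : ∀ i < n, φ (u i) = φ (u (n + i)) := by
            intro i hi
            by_cases h2 : i ≤ j
            · rw [hufst i hi h2, husnd i h2]; exact hcol i (by omega)
            · rw [hufst2 i hi (by omega), husnd2 i (by omega)]
              have := hcol (i + 1) (by omega)
              rw [show n + 1 + (i + 1) = n + 1 + i + 1 by omega] at this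
              exact this
          obtain ⟨i, hi, hieq⟩ := IH hn u hulazy hucol
          by_cases h2 : i ≤ j
          · rw [hufst i hi h2, husnd i h2] at hieq
            exact hc i (by omega) hieq
          · rw [hufst2 i hi (by omega), husnd2 i (by omega)] at hieq
            have := hc (i + 1) (by omega)
            rw [show n + 1 + (i + 1) = n + 1 + i + 1 by omega] at this
            exact this hieq
        · -- second pair adjacent: adjacent vertices with equal colours, contradiction
          apply hne _ _ ha2
          have e1 := hcol j (by omega)
          have e2 := hcol (j + 1) (by omega)
          rw [show n + 1 + (j + 1) = n + 1 + j + 1 by omega] at e2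
          rw [← e1, hjeq, e2]
      · -- boundary: j = n, i.e. v n = v (n + 1)
        have hjn' : j = n := by omega
        rcases Nat.eq_zero_or_pos n with hn0 | hn
        · -- t = 1 : v 0 = v 1 directly contradicts hc
          subst hn0
          exact absurd (by simpa [hjn'] using hjeq) (by simpa using hc 0 (by omega))
        · set u : ℕ → V := fun k => if k < n then v k else v (n + 1 + (k - n)) with hu
          have hufst : ∀ k, k < n → u k = v k := by
            intro k h1
            simp only [hu]
            rw [if_pos h1]
          have husnd : ∀ k, u (n + k) = v (n + 1 + k) := by
            intro k
            simp only [hu, Nat.add_sub_cancel_left]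
            rw [if_neg (by omega : ¬ n + k < n)]
          have hulazy : IsLazyWalkSeq G (2 * n) u := by
            intro i hi
            by_cases h1 : i + 1 < n
            · rw [hufst i (by omega), hufst (i + 1) h1]
              exact hlazy i (by omega)
            · by_cases h4 : i < n
              · have hin : i + 1 = n := by omega
                have hun : u (i + 1) = v (n + 1) := by
                  have e := husnd 0
                  rw [show n + 0 = n by omega, show n + 1 + 0 = n + 1 by omega] at e
                  rw [hin]
                  exact e
                rw [hufst i h4, hun]
                have hnn : v n = v (n + 1) := by
                  have := hjeq; rw [hjn'] at this; exact this
                rw [← hnn, ← hin]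
                exact hlazy i (by omega)
              · have hm : n + (i - n) = i := by omega
                have hm1 : n + (i - n + 1) = i + 1 := by omega
                have e1 := husnd (i - n)
                have e2 := husnd (i - n + 1)
                rw [hm] at e1
                rw [hm1] at e2
                rw [e1, e2]
                have := hlazy (n + 1 + (i - n)) (by omega)
                rw [show n + 1 + (i - n) + 1 = n + 1 + (i - n + 1) by omega] at this
                exact this
          have hucol : ∀ i < n, φ (u i) = φ (u (n + i)) := by
            intro i hi
            rw [hufst i hi, husnd i]
            exact hcol i (by omega)
          obtain ⟨i, hi, hieq⟩ := IH hn u hulazy hucol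
          rw [hufst i hi, husnd i] at hieq
          exact hc i (by omega) hieq
end

section
/- For every graph G, the walk-nonrepetitive chromatic number satisfies σ(G) ≤ ρ(G) · χ(G²), where ρ(G) is the stroll-nonrepetitive chromatic number and χ(G²) is the chromatic number of the square of G. -/
/-- Adjacency in the square `G²`: distinct vertices at distance at most 2. -/
def SquareAdj {V : Type*} (G : SimpleGraph V) (u w : V) : Prop :=
  u ≠ w ∧ (G.Adj u w ∨ ∃ x, G.Adj u x ∧ G.Adj x w)

section SquareColouring

variable {V C : Type*} {G : SimpleGraph V} {ψ : V → C}

theorem eq_of_adj_of_adj_of_squareColouring (hψ : ∀ u w, SquareAdj G u w → ψ u ≠ ψ w)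
    {x y y' : V} (hy : G.Adj x y) (hy' : G.Adj x y') (hcol : ψ y = ψ y') : y = y' := by
  by_contra hne
  exact hψ y y' ⟨hne, .inr ⟨x, hy.symm, hy'⟩⟩ hcol

variable (hψ : ∀ u w, SquareAdj G u w → ψ u ≠ ψ w) {t : ℕ} {v : ℕ → V}
  (hv : IsWalkSeq G (2 * t) v) (hcol : ∀ i < t, ψ (v i) = ψ (v (t + i)))
include hψ hv hcol

theorem IsWalkSeq.shift_eq_iff_succ {i : ℕ} (hi : i + 1 < t) :
    v i = v (t + i) ↔ v (i + 1) = v (t + (i + 1)) := by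
  have h₀ : G.Adj (v i) (v (i + 1)) := hv i (by omega)
  have h₁ : G.Adj (v (t + i)) (v (t + (i + 1))) := hv (t + i) (by omega)
  constructor
  · intro h
    exact eq_of_adj_of_adj_of_squareColouring hψ h₀ (h ▸ h₁) (hcol (i + 1) hi)
  · intro h
    exact eq_of_adj_of_adj_of_squareColouring hψ h₀.symm (h ▸ h₁.symm) (hcol i (by omega))

theorem IsWalkSeq.shift_eq_iff_zero {i : ℕ} (hi : i < t) : v i = v (t + i) ↔ v 0 = v t := by
  induction i with
  | zero => rfl
  | succ i ih => exact (hv.shift_eq_iff_succ hψ hcol hi).symm.trans (ih (by omega))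

end SquareColouring

theorem WalkNonrepetitive.of_strollNonrepetitive_of_squareColouring {V C : Type*}
    {G : SimpleGraph V} {χ : V → C} (hstroll : StrollNonrepetitive G χ)
    (hsquare : ∀ u w, SquareAdj G u w → χ u ≠ χ w) : WalkNonrepetitive G χ := by
  intro t ht v hv hcol
  have hboring : v 0 = v t := by
    by_contra hne
    have hstroll' : ∀ i < t, v i ≠ v (t + i) :=
      fun i hi => (hv.shift_eq_iff_zero hsquare hcol hi).not.mpr hne
    obtain ⟨i, hi, hdiff⟩ := hstroll t ht v hv hstroll'
    exact hdiff (hcol i hi)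
  exact fun i hi => (hv.shift_eq_iff_zero hsquare hcol hi).mpr hboring

theorem StrollNonrepetitive.of_refines {V C D : Type*} {G : SimpleGraph V} {φ : V → C}
    {χ : V → D} (hφ : StrollNonrepetitive G φ) (hχ : ∀ u w, χ u = χ w → φ u = φ w) :
    StrollNonrepetitive G χ := by
  intro t ht v hv hstroll
  obtain ⟨i, hi, hne⟩ := hφ t ht v hv hstroll
  exact ⟨i, hi, mt (hχ _ _) hne⟩

/-- `σ(G) ≤ ρ(G) · χ(G²)`, phrased through colourings with `a` and `b` colours. -/
theorem sigma_le_rho_mul_chi_square {V : Type*} (G : SimpleGraph V) (a b : ℕ)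
    (h₁ : ∃ φ : V → Fin a, StrollNonrepetitive G φ)
    (h₂ : ∃ ψ : V → Fin b, ∀ u w : V, SquareAdj G u w → ψ u ≠ ψ w) :
    ∃ χ : V → Fin (a * b), WalkNonrepetitive G χ := by
  obtain ⟨φ, hφ⟩ := h₁
  obtain ⟨ψ, hψ⟩ := h₂
  set χ : V → Fin (a * b) := fun v => finProdFinEquiv (φ v, ψ v)
  have hcomponents : ∀ u w, χ u = χ w → φ u = φ w ∧ ψ u = ψ w := fun u w h =>
    Prod.ext_iff.mp (finProdFinEquiv.injective h)
  refine ⟨χ, .of_strollNonrepetitive_of_squareColouring ?_ ?_⟩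
  · exact hφ.of_refines fun u w h => (hcomponents u w h).1
  · exact fun u w huw h => hψ u w huw (hcomponents u w h).2
end

section
/- For every graph G with maximum degree Δ, for every vertex v of G, and for every positive integer s, the number of paths on 2s vertices (counted as subgraphs, so a path and its reverse are counted once) that contain v is at most s·Δ·(Δ−1)^{2s−2}. -/
/-!
Cut a path through `v` at `v`: it is the reversal of a path of `i` further vertices leaving `v`,
glued to one of `j` further vertices leaving `v`, where the first steps of the two pieces differ.
A path leaving a vertex has at most `Δ` choices for its first step and at most `Δ - 1` for each
later one, since it cannot return to the vertex it just left; once one piece is fixed, the same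
holds for the first step of the other. So each of the `n` positions of `v` on a path of `n`
vertices accounts for at most `Δ (Δ - 1) ^ (n - 2)` paths.
-/

theorem Set.ncard_biUnion_le_ncard_mul {ι α : Type*} {T : Set ι} (hT : T.Finite)
    {f : ι → Set α} {m : ℕ} (h : ∀ i ∈ T, (f i).ncard ≤ m) :
    (⋃ i ∈ T, f i).ncard ≤ T.ncard * m := by
  obtain ⟨s, rfl⟩ := hT.exists_finset_coe
  rw [Set.ncard_coe_finset, ← smul_eq_mul]
  exact (s.set_ncard_biUnion_le f).trans (s.sum_le_card_nsmul _ _ h)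

namespace SimpleGraph

variable {V : Type*} (G : SimpleGraph V)

/-- The lists `l` such that `u :: l` is a path on `k + 1` vertices whose second vertex is not `w`.
Taking `w = u` imposes no condition on the second vertex. -/
def pathTails (u w : V) (k : ℕ) : Set (List V) :=
  {l | l.length = k ∧ (u :: l).IsChain G.Adj ∧ (u :: l).Nodup ∧ l.head? ≠ some w}

/-- The gluings at `v` of a reversed path tail of length `i` and a path tail of length `j`. Every
path with `v` at position `i` is one, but the two tails of a gluing may meet away from `v`. -/
def pathsThrough (v : V) (i j : ℕ) : Set (List V) :=
  ⋃ Q ∈ G.pathTails v v j, (fun P => P.reverse ++ v :: Q) '' G.pathTails v (Q.headD v) i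

variable {G}

theorem pathTails_finite [Finite V] (u w : V) (k : ℕ) : (G.pathTails u w k).Finite :=
  (List.finite_length_eq V k).subset fun _ hl => hl.1

theorem pathTails_zero (u w : V) : G.pathTails u w 0 = {[]} := by
  ext l
  constructor
  · rintro ⟨hl, -⟩
    exact List.length_eq_zero_iff.mp hl
  · rintro rfl
    simp [pathTails]

theorem pathTails_succ_subset (u w : V) (k : ℕ) :
    G.pathTails u w (k + 1) ⊆ ⋃ x ∈ G.neighborSet u \ {w}, (x :: ·) '' G.pathTails x u k := by
  rintro (_ | ⟨x, t⟩) ⟨hlen, hchain, hnodup, hhead⟩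
  · simp at hlen
  rw [List.isChain_cons_cons] at hchain
  rw [List.nodup_cons] at hnodup
  refine Set.mem_biUnion (x := x) ⟨hchain.1, fun h => hhead (by simp_all)⟩ ⟨t, ?_, rfl⟩
  refine ⟨by simpa using hlen, hchain.2, hnodup.2, fun h => hnodup.1 ?_⟩
  exact List.mem_cons_of_mem _ (List.mem_of_mem_head? h)

theorem ncard_pathTails_succ_le [Finite V] {u : V} (w : V) {k m : ℕ}
    (hk : ∀ x, G.Adj u x → (G.pathTails x u k).ncard ≤ m) :
    (G.pathTails u w (k + 1)).ncard ≤ (G.neighborSet u \ {w}).ncard * m := by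
  refine (Set.ncard_le_ncard (pathTails_succ_subset u w k) ?_).trans ?_
  · exact (Set.toFinite _).biUnion fun x _ => (pathTails_finite x u k).image _
  refine Set.ncard_biUnion_le_ncard_mul (Set.toFinite _) fun x hx => ?_
  rw [Set.ncard_image_of_injective _ List.cons_injective]
  exact hk x hx.1

theorem pathsThrough_finite [Finite V] (v : V) (i j : ℕ) : (G.pathsThrough v i j).Finite :=
  (pathTails_finite v v j).biUnion fun _ _ => (pathTails_finite _ _ i).image _

theorem append_cons_mem_pathsThrough {A Q : List V} {v : V}
    (hchain : (A ++ v :: Q).IsChain G.Adj) (hnodup : (A ++ v :: Q).Nodup) :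
    A ++ v :: Q ∈ G.pathsThrough v A.length Q.length := by
  obtain ⟨hA, hvQ, hdisj⟩ := List.nodup_append.mp hnodup
  have hvA : v ∉ A := fun h => hdisj v h v List.mem_cons_self rfl
  have hQ : Q ∈ G.pathTails v v Q.length :=
    ⟨rfl, (List.isChain_append.mp hchain).2.1, hvQ,
      fun h => (List.nodup_cons.mp hvQ).1 (List.mem_of_mem_head? h)⟩
  refine Set.mem_biUnion hQ ⟨A.reverse, ⟨by simp, ?_, ?_, ?_⟩, by simp⟩
  · have hAv : (A ++ [v]).IsChain G.Adj := by
      rw [← List.singleton_append, ← List.append_assoc] at hchain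
      exact (List.isChain_append.mp hchain).1
    simpa using List.isChain_reverse.mpr (hAv.imp fun _ _ h => h.symm)
  · exact List.nodup_cons.mpr ⟨by simpa using hvA, List.nodup_reverse.mpr hA⟩
  -- `Q.headD v` lies on `v :: Q`, which is disjoint from `A`.
  · intro h
    rw [List.head?_reverse] at h
    refine hdisj _ (List.mem_of_mem_getLast? h) _ ?_ rfl
    cases Q <;> simp

variable [Fintype V] [DecidableRel G.Adj] {Δ : ℕ}

theorem ncard_neighborSet (u : V) : (G.neighborSet u).ncard = G.degree u := by
  rw [Set.ncard_eq_toFinset_card', Set.toFinset_card, card_neighborSet_eq_degree]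

theorem ncard_pathTails_le_of_adj (hΔ : ∀ u, G.degree u ≤ Δ) (k : ℕ) :
    ∀ {u w : V}, G.Adj u w → (G.pathTails u w k).ncard ≤ (Δ - 1) ^ k := by
  induction k with
  | zero => simp [pathTails_zero]
  | succ k ih =>
    intro u w huw
    calc (G.pathTails u w (k + 1)).ncard
        ≤ (G.neighborSet u \ {w}).ncard * (Δ - 1) ^ k :=
          ncard_pathTails_succ_le w fun x hx => ih hx.symm
      _ ≤ (Δ - 1) * (Δ - 1) ^ k := by
          rw [Set.ncard_sdiff_singleton_of_mem (show w ∈ G.neighborSet u from huw)]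
          gcongr
          exact (ncard_neighborSet u).trans_le (hΔ u)
      _ = (Δ - 1) ^ (k + 1) := (pow_succ' _ _).symm

theorem ncard_pathTails_succ_le_mul_pow (hΔ : ∀ u, G.degree u ≤ Δ) (u w : V) (k : ℕ) :
    (G.pathTails u w (k + 1)).ncard ≤ Δ * (Δ - 1) ^ k :=
  calc (G.pathTails u w (k + 1)).ncard ≤ (G.neighborSet u \ {w}).ncard * (Δ - 1) ^ k :=
        ncard_pathTails_succ_le w fun _ hx => ncard_pathTails_le_of_adj hΔ k hx.symm
    _ ≤ Δ * (Δ - 1) ^ k := by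
        gcongr
        exact (Set.ncard_le_ncard Set.sdiff_subset).trans
          ((ncard_neighborSet u).trans_le (hΔ u))

theorem ncard_pathsThrough_le (hΔ : ∀ u, G.degree u ≤ Δ) (v : V) {i j : ℕ} (hij : 0 < i + j) :
    (G.pathsThrough v i j).ncard ≤ Δ * (Δ - 1) ^ (i + j - 1) := by
  have himage (Q : List V) :
      ((fun P => P.reverse ++ v :: Q) '' G.pathTails v (Q.headD v) i).ncard ≤
        (G.pathTails v (Q.headD v) i).ncard :=
    Set.ncard_image_le (pathTails_finite _ _ _)
  cases j with
  | zero =>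
    obtain ⟨i, rfl⟩ : ∃ k, i = k + 1 := ⟨i - 1, by omega⟩
    rw [pathsThrough, pathTails_zero, Set.biUnion_singleton]
    simpa using (himage []).trans (ncard_pathTails_succ_le_mul_pow hΔ v v i)
  | succ j =>
    calc (G.pathsThrough v i (j + 1)).ncard
        ≤ (G.pathTails v v (j + 1)).ncard * (Δ - 1) ^ i := by
          refine Set.ncard_biUnion_le_ncard_mul (pathTails_finite _ _ _) ?_
          rintro (_ | ⟨w, Q⟩) ⟨hlen, hchain, -⟩
          · simp at hlen
          exact (himage _).trans
            (ncard_pathTails_le_of_adj hΔ i (List.isChain_cons_cons.mp hchain).1)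
      _ ≤ Δ * (Δ - 1) ^ j * (Δ - 1) ^ i := by
          gcongr
          exact ncard_pathTails_succ_le_mul_pow hΔ v v j
      _ = Δ * (Δ - 1) ^ (i + (j + 1) - 1) := by
          rw [mul_assoc, ← pow_add]
          congr 2
          omega

theorem ncard_paths_containing_le (hΔ : ∀ u, G.degree u ≤ Δ) (v : V) {n : ℕ} (hn : 2 ≤ n) :
    {l : List V | l.length = n ∧ l.IsChain G.Adj ∧ l.Nodup ∧ v ∈ l}.ncard ≤
      n * (Δ * (Δ - 1) ^ (n - 2)) := by
  have hsub : {l : List V | l.length = n ∧ l.IsChain G.Adj ∧ l.Nodup ∧ v ∈ l} ⊆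
      ⋃ i ∈ (Finset.range n : Set ℕ), G.pathsThrough v i (n - 1 - i) := by
    rintro l ⟨hlen, hchain, hnodup, hv⟩
    obtain ⟨A, Q, rfl⟩ := List.append_of_mem hv
    have hQ : Q.length = n - 1 - A.length := by simp at hlen; omega
    refine Set.mem_biUnion (x := A.length) (by simp at hlen ⊢; omega) ?_
    rw [← hQ]
    exact append_cons_mem_pathsThrough hchain hnodup
  have hfin : (⋃ i ∈ (Finset.range n : Set ℕ), G.pathsThrough v i (n - 1 - i)).Finite :=
    (Finset.finite_toSet _).biUnion fun i _ => pathsThrough_finite v i _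
  refine (Set.ncard_le_ncard hsub hfin).trans ?_
  refine (Set.ncard_biUnion_le_ncard_mul (m := Δ * (Δ - 1) ^ (n - 2)) (Finset.finite_toSet _)
    fun i hi => ?_).trans_eq (by simp)
  have hi : i < n := by simpa using hi
  convert ncard_pathsThrough_le hΔ v (i := i) (j := n - 1 - i) (by omega) using 3
  omega

end SimpleGraph

theorem paths_containing_vertex_bound_general {V : Type*} [Fintype V]
    (G : SimpleGraph V) [DecidableRel G.Adj] (Δ : ℕ) (hΔ : ∀ u : V, G.degree u ≤ Δ)
    (v : V) (s : ℕ) (hs : 0 < s) :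
    Set.ncard {l : List V | l.length = 2 * s ∧ l.Chain' G.Adj ∧ l.Nodup ∧ v ∈ l}
      ≤ 2 * (s * Δ * (Δ - 1) ^ (2 * s - 2)) :=
  (G.ncard_paths_containing_le hΔ v (n := 2 * s) (by omega)).trans_eq (by ring)

/-- For every graph `G` with maximum degree `Δ`, every vertex `v` and every `s ≥ 1`,
the number of paths on `2s` vertices containing `v` is at most `s·Δ·(Δ-1)^(2s-2)`.
Paths are counted as subgraphs (a path and its reverse are counted once); here we
count vertex sequences (lists of `2s` distinct vertices, consecutive ones adjacent,
containing `v`), so that each such path is counted exactly twice — once in each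
direction — whence the factor `2`. -/
theorem paths_containing_vertex_bound {V : Type*} [Fintype V] [DecidableEq V]
    (G : SimpleGraph V) [DecidableRel G.Adj] (Δ : ℕ) (hΔ : ∀ u : V, G.degree u ≤ Δ)
    (v : V) (s : ℕ) (hs : 0 < s) :
    Set.ncard {l : List V | l.length = 2 * s ∧ l.Chain' G.Adj ∧ l.Nodup ∧ v ∈ l}
      ≤ 2 * (s * Δ * (Δ - 1) ^ (2 * s - 2)) :=
  paths_containing_vertex_bound_general G Δ hΔ v s hs
end

section
/- If a graph G has a shadow-complete layering (V_0, V_1, ..., V_n), then π(G) ≤ 4 · max_i π(G[V_i]), where π is the nonrepetitive chromatic number. -/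
/-- A colouring that is nonrepetitive on the subgraph of `G` induced by `S`. -/
def NonrepetitiveOn {V C : Type*} (G : SimpleGraph V) (S : Set V) (φ : V → C) : Prop :=
  ∀ t : ℕ, 0 < t → ∀ v : ℕ → V, (∀ i < 2 * t, v i ∈ S) → IsPathSeq G (2 * t) v →
    ∃ i < t, φ (v i) ≠ φ (v (t + i))

/-- `L` is a layering of `G`: endpoints of each edge are in the same or
consecutive layers. -/
def IsLayering {V : Type*} (G : SimpleGraph V) (L : V → ℕ) : Prop :=
  ∀ u w : V, G.Adj u w → L u ≤ L w + 1 ∧ L w ≤ L u + 1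

/-- A layering is shadow-complete if for each `i ≥ 1`, the shadow (the set of
vertices of layer `i-1` adjacent to a fixed connected component of the subgraph
induced by layers `≥ i`) is a clique. -/
def ShadowComplete {V : Type*} (G : SimpleGraph V) (L : V → ℕ) : Prop :=
  ∀ i : ℕ, 1 ≤ i → ∀ (u w x y : V) (hu : i ≤ L u) (hw : i ≤ L w),
    L x = i - 1 → L y = i - 1 → G.Adj x u → G.Adj y w →
    (G.induce {z : V | i ≤ L z}).Reachable ⟨u, hu⟩ ⟨w, hw⟩ →
    x ≠ y → G.Adj x y

def IsLazyWalk (n : ℕ) (ℓ : ℕ → ℕ) : Prop :=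
  ∀ i, i + 1 < n → ℓ (i + 1) ≤ ℓ i + 1 ∧ ℓ i ≤ ℓ (i + 1) + 1

def IsSquareAt {α : Type*} (f : ℕ → α) (p m : ℕ) : Prop :=
  ∀ j < m, f (p + j) = f (p + j + m)

def IsSquareFree {α : Type*} (f : ℕ → α) : Prop :=
  ∀ p m, 0 < m → ¬ IsSquareAt f p m

def IsWalkNonrepetitive {α : Type*} (w : ℕ → α) : Prop :=
  ∀ t ℓ, IsLazyWalk (2 * t) ℓ → (∀ i < t, w (ℓ i) = w (ℓ (t + i))) → ∀ i < t, ℓ i = ℓ (t + i)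

namespace IsLazyWalk

variable {n : ℕ} {ℓ : ℕ → ℕ}

theorem exists_eq (hℓ : IsLazyWalk n ℓ) {m x : ℕ} (hm : m < n) (h0 : ℓ 0 ≤ x) (hx : x ≤ ℓ m) :
    ∃ i ≤ m, ℓ i = x := by
  induction m with
  | zero => exact ⟨0, le_rfl, by omega⟩
  | succ m ih =>
    rcases le_or_gt x (ℓ m) with h | h
    · obtain ⟨i, hi, rfl⟩ := ih (by omega) h
      exact ⟨i, by omega, rfl⟩
    · exact ⟨m + 1, le_rfl, by have := (hℓ m hm).1; omega⟩

theorem reverse (hℓ : IsLazyWalk n ℓ) : IsLazyWalk n (fun i => ℓ (n - 1 - i)) := by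
  intro i hi
  have h := hℓ (n - 2 - i) (by omega)
  rw [show n - 2 - i + 1 = n - 1 - i by omega] at h
  simp only
  rw [show n - 1 - (i + 1) = n - 2 - i by omega]
  exact h.symm

end IsLazyWalk

section WalkNonrepetitive

variable {α : Type*} {w : ℕ → α}

theorem IsSquareFree.ne_succ (hsq : IsSquareFree w) (n : ℕ) : w n ≠ w (n + 1) :=
  fun h => hsq n 1 one_pos fun j hj => by rwa [Nat.lt_one_iff.1 hj]

theorem IsSquareFree.eq_or_add_three_le (hpar : ∀ x y, w x = w y → x / 2 % 2 = y / 2 % 2)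
    (hsq : IsSquareFree w) {x y : ℕ} (h : w x = w y) : x = y ∨ x + 3 ≤ y ∨ y + 3 ≤ x := by
  have hxy := hpar x y h
  rcases (by omega : x = y ∨ x + 3 ≤ y ∨ y + 3 ≤ x ∨ y = x + 1 ∨ x = y + 1 ∨
      y = x + 2 ∨ x = y + 2) with h' | h' | h' | rfl | rfl | rfl | rfl
  · exact .inl h'
  · exact .inr (.inl h')
  · exact .inr (.inr h')
  · exact (hsq.ne_succ x h).elim
  · exact (hsq.ne_succ y h.symm).elim
  all_goals omega

/-- Two matched lazy steps either move in parallel or as mirror images. -/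
theorem IsSquareFree.add_eq_or_add_eq (hsq : IsSquareFree w) {x y x' y' : ℕ}
    (hx : x' ≤ x + 1 ∧ x ≤ x' + 1) (hy : y' ≤ y + 1 ∧ y ≤ y' + 1) (h : w x = w y)
    (h' : w x' = w y') : x' + y = x + y' ∨ x' + y' = x + y := by
  by_contra! hc
  rcases (by omega : (x' = x ∧ (y' = y + 1 ∨ y = y' + 1)) ∨
      (y' = y ∧ (x' = x + 1 ∨ x = x' + 1))) with ⟨rfl, rfl | rfl⟩ | ⟨rfl, rfl | rfl⟩
  · exact hsq.ne_succ y (h ▸ h')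
  · exact hsq.ne_succ y' (h' ▸ h)
  · exact hsq.ne_succ x (h' ▸ h.symm).symm
  · exact hsq.ne_succ x' (h ▸ h')

variable {t : ℕ} {ℓ : ℕ → ℕ}

theorem IsSquareFree.false_of_forall_lt (hpar : ∀ x y, w x = w y → x / 2 % 2 = y / 2 % 2)
    (hsq : IsSquareFree w) (hℓ : IsLazyWalk (2 * t) ℓ) (hw : ∀ i < t, w (ℓ i) = w (ℓ (t + i)))
    (ht : 0 < t) (hlt : ∀ i < t, ℓ i < ℓ (t + i)) : False := by
  have far : ∀ i < t, ℓ i + 3 ≤ ℓ (t + i) := fun i hi => by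
    have := hsq.eq_or_add_three_le hpar (hw i hi); have := hlt i hi; omega
  have par : ∀ i < t, ℓ i / 2 % 2 = ℓ (t + i) / 2 % 2 := fun i hi => hpar _ _ (hw i hi)
  have step : ∀ i, i + 1 < t → ℓ (i + 1) + ℓ (t + i) = ℓ i + ℓ (t + (i + 1)) ∨
      ℓ (i + 1) + ℓ (t + (i + 1)) = ℓ i + ℓ (t + i) := fun i hi =>
    hsq.add_eq_or_add_eq (hℓ i (by omega)) (hℓ (t + i) (by omega)) (hw i (by omega)) (hw _ hi)
  have hturn := hℓ (t - 1) (by omega)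
  rw [Nat.sub_add_cancel ht] at hturn
  have h0 : ℓ 0 + 3 ≤ ℓ t := by simpa using far 0 ht
  have par0 : ℓ 0 / 2 % 2 = ℓ t / 2 % 2 := by simpa using par 0 ht
  by_cases heven : (ℓ t - ℓ 0) % 2 = 0
  · -- `ℓ t - ℓ 0 ≡ 0 mod 4`, and a mirrored step would change the difference by `2`
    have shift : ∀ i < t, ℓ (t + i) = ℓ i + (ℓ t - ℓ 0) := by
      intro i
      induction i with
      | zero => intro; rw [add_zero]; omega
      | succ i ih =>
        intro hi
        have := step i hi; have := par i (by omega); have := par (i + 1) hi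
        have := ih (by omega); have := hℓ i (by omega); have := hℓ (t + i) (by omega); omega
    refine hsq (ℓ 0) (ℓ t - ℓ 0) (by omega) fun j hj => ?_
    obtain ⟨i, hi, hij⟩ := hℓ.exists_eq (m := t - 1) (x := ℓ 0 + j) (by omega) (by omega) (by omega)
    rw [← hij, hw i (by omega), shift i (by omega)]
  · -- an odd difference forbids parallel moves, so the sums `ℓ i + ℓ (t + i)` are constant
    have mirror : ∀ i < t, ℓ i + ℓ (t + i) = ℓ 0 + ℓ t := by
      intro i
      induction i with
      | zero => intro; rw [add_zero]
      | succ i ih =>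
        intro hi
        have := step i hi; have := par i (by omega); have := par (i + 1) hi
        have := ih (by omega); have := hℓ i (by omega); have := hℓ (t + i) (by omega); omega
    have := mirror (t - 1) (by omega); have := far (t - 1) (by omega)
    omega

theorem isWalkNonrepetitive_of_isSquareFree (hpar : ∀ x y, w x = w y → x / 2 % 2 = y / 2 % 2)
    (hsq : IsSquareFree w) : IsWalkNonrepetitive w := by
  intro t ℓ hℓ hw
  -- the offsets `ℓ (t + i) - ℓ i` are `0` or of size at least `3`, and change by at most `2`
  have sign : ∀ i < t, (ℓ i = ℓ (t + i) ↔ ℓ 0 = ℓ t) ∧ (ℓ i < ℓ (t + i) ↔ ℓ 0 < ℓ t) := by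
    intro i
    induction i with
    | zero => intro; simp
    | succ i ih =>
      intro hi
      have := ih (by omega); have := hℓ i (by omega); have := hℓ (t + i) (by omega)
      have := hsq.eq_or_add_three_le hpar (hw i (by omega))
      have := hsq.eq_or_add_three_le hpar (hw (i + 1) hi)
      rw [← add_assoc] at *; omega
  rcases lt_trichotomy (ℓ 0) (ℓ t) with h | h | h
  · intro i hi
    exact (hsq.false_of_forall_lt hpar hℓ hw (by omega) fun j hj => (sign j hj).2.2 h).elim
  · exact fun i hi => (sign i hi).1.2 h
  · -- reversing the walk reverses the sign of the offsets
    intro i hi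
    refine (hsq.false_of_forall_lt hpar hℓ.reverse (fun j hj => ?_) (by omega) fun j hj => ?_).elim
    all_goals
      rw [show 2 * t - 1 - j = t + (t - 1 - j) by omega,
        show 2 * t - 1 - (t + j) = t - 1 - j by omega]
    · exact (hw _ (by omega)).symm
    · have := sign (t - 1 - j) (by omega); omega

end WalkNonrepetitive

/-- The fixed point of the substitution sending the `m`-th letter `x` to `x x x̄ x̄` if `m` is even
and to `x x̄ x̄ x` if `m` is odd. -/
def pathBit : ℕ → ℕ
  | 0 => 0
  | n + 1 => (pathBit ((n + 1) / 4) + ((n + 1) % 4 + (n + 1) / 4 % 2) / 2) % 2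

theorem pathBit_lt_two (n : ℕ) : pathBit n < 2 := by
  cases n <;> simp only [pathBit] <;> omega

theorem pathBit_four_mul_add (m : ℕ) {s : ℕ} (hs : s < 4) :
    pathBit (4 * m + s) = (pathBit m + (s + m % 2) / 2) % 2 := by
  obtain ⟨rfl, rfl⟩ | ⟨n, hn⟩ : (m = 0 ∧ s = 0) ∨ ∃ n, 4 * m + s = n + 1 :=
    (Nat.eq_zero_or_eq_succ_pred (4 * m + s)).imp (by omega) fun h => ⟨_, h⟩
  · simp [pathBit]
  · rw [hn, pathBit, ← hn, show (4 * m + s) / 4 = m by omega, show (4 * m + s) % 4 = s by omega]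

theorem pathBit_add_pathBit (n : ℕ) : (pathBit (2 * n) + pathBit (2 * n + 1)) % 2 = n / 2 % 2 := by
  obtain ⟨q, rfl | rfl⟩ := Nat.even_or_odd' n
  · rw [show 2 * (2 * q) = 4 * q + 0 by ring, show 4 * q + 0 + 1 = 4 * q + 1 by ring,
      pathBit_four_mul_add q (by norm_num), pathBit_four_mul_add q (by norm_num)]
    have := pathBit_lt_two q
    omega
  · rw [show 2 * (2 * q + 1) = 4 * q + 2 by ring, show 4 * q + 2 + 1 = 4 * q + 3 by ring,
      pathBit_four_mul_add q (by norm_num), pathBit_four_mul_add q (by norm_num)]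
    have := pathBit_lt_two q
    omega

theorem pathBit_ne_add_two {q : ℕ} (hq : q % 4 < 2) : pathBit q ≠ pathBit (q + 2) := by
  obtain ⟨m, s, hs, rfl⟩ : ∃ m s, s < 2 ∧ q = 4 * m + s := ⟨q / 4, q % 4, hq, by omega⟩
  rw [add_assoc, pathBit_four_mul_add m (by omega), pathBit_four_mul_add m (by omega)]
  have := pathBit_lt_two m
  omega

theorem pathBit_eq_of_four_mul_add_three {q q' : ℕ}
    (h : pathBit (4 * q + 3) = pathBit (4 * q' + 3)) (hq : q % 2 = q' % 2) :
    pathBit q = pathBit q' := by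
  rw [pathBit_four_mul_add q (by norm_num), pathBit_four_mul_add q' (by norm_num)] at h
  have := pathBit_lt_two q; have := pathBit_lt_two q'
  omega

namespace IsSquareAt

variable {p m : ℕ}

theorem pathBit_div_four (h : IsSquareAt pathBit p (8 * m)) :
    IsSquareAt pathBit (p / 4) (2 * m) := by
  intro j hj
  have e := h (4 * (p / 4 + j) + 3 - p) (by omega)
  rw [show p + (4 * (p / 4 + j) + 3 - p) = 4 * (p / 4 + j) + 3 by omega,
    show 4 * (p / 4 + j) + 3 + 8 * m = 4 * (p / 4 + j + 2 * m) + 3 by ring] at e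
  exact pathBit_eq_of_four_mul_add_three e (by omega)

theorem div_two_mod_two_eq (h : IsSquareAt pathBit p (2 * m)) {n : ℕ} (hp : p ≤ 2 * n)
    (hn : 2 * n + 1 < p + 2 * m) : n / 2 % 2 = (n + m) / 2 % 2 := by
  have h0 := h (2 * n - p) (by omega)
  have h1 := h (2 * n + 1 - p) (by omega)
  rw [show p + (2 * n - p) = 2 * n by omega, show 2 * n + 2 * m = 2 * (n + m) by ring] at h0
  rw [show p + (2 * n + 1 - p) = 2 * n + 1 by omega,
    show 2 * n + 1 + 2 * m = 2 * (n + m) + 1 by ring] at h1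
  rw [← pathBit_add_pathBit, ← pathBit_add_pathBit, h0, h1]

end IsSquareAt

theorem not_isSquareAt_pathBit_two (p : ℕ) : ¬ IsSquareAt pathBit p 2 := by
  intro h
  have h0 := h 0 two_pos
  have h1 := h 1 one_lt_two
  rw [add_zero] at h0
  rcases (by omega : p % 4 < 2 ∨ p % 4 = 3 ∨ p % 4 = 2) with hp | hp | hp
  · exact pathBit_ne_add_two hp h0
  · exact pathBit_ne_add_two (q := p + 1) (by omega) h1
  · have := IsSquareAt.div_two_mod_two_eq (m := 1) h (n := p / 2) (by omega) (by omega)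
    omega

theorem not_isSquareAt_pathBit (m : ℕ) (hm : 0 < m) (p : ℕ) :
    ¬ IsSquareAt pathBit p (2 * m) := by
  induction m using Nat.strong_induction_on generalizing p with
  | _ m ih =>
    intro h
    rcases (by omega : m = 1 ∨ m % 4 = 0 ∨ m % 4 = 2 ∨ (3 ≤ m ∧ m % 2 = 1)) with
      rfl | hm4 | hm4 | hm4
    · exact not_isSquareAt_pathBit_two p h
    · obtain ⟨m', rfl⟩ : ∃ m', m = 4 * m' := ⟨m / 4, by omega⟩
      rw [← mul_assoc] at h
      exact ih m' (by omega) (by omega) (p / 4) h.pathBit_div_four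
    -- otherwise the square matches the letter pairs at `2n` and `2(n + m)` for an `n` with
    -- `n / 2` and `(n + m) / 2` of different parity
    · have := h.div_two_mod_two_eq (n := (p + 1) / 2) (by omega) (by omega)
      omega
    · have := h.div_two_mod_two_eq (n := (p + 1) / 2) (by omega) (by omega)
      have := h.div_two_mod_two_eq (n := (p + 1) / 2 + 1) (by omega) (by omega)
      omega

def pathColor (n : ℕ) : Fin 4 :=
  ⟨2 * pathBit (2 * n) + pathBit (2 * n + 1), by
    have := pathBit_lt_two (2 * n); have := pathBit_lt_two (2 * n + 1); omega⟩

theorem pathColor_eq_iff {x y : ℕ} : pathColor x = pathColor y ↔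
    pathBit (2 * x) = pathBit (2 * y) ∧ pathBit (2 * x + 1) = pathBit (2 * y + 1) := by
  have := pathBit_lt_two (2 * x); have := pathBit_lt_two (2 * x + 1)
  have := pathBit_lt_two (2 * y); have := pathBit_lt_two (2 * y + 1)
  rw [pathColor, pathColor, Fin.mk.injEq]
  omega

theorem div_two_mod_two_eq_of_pathColor_eq {x y : ℕ} (h : pathColor x = pathColor y) :
    x / 2 % 2 = y / 2 % 2 := by
  obtain ⟨h0, h1⟩ := pathColor_eq_iff.1 h
  rw [← pathBit_add_pathBit, ← pathBit_add_pathBit, h0, h1]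

theorem isSquareFree_pathColor : IsSquareFree pathColor := by
  intro p m hm h
  refine not_isSquareAt_pathBit m hm (2 * p) fun j hj => ?_
  obtain ⟨k, rfl | rfl⟩ := Nat.even_or_odd' j
  · obtain ⟨h0, -⟩ := pathColor_eq_iff.1 (h k (by omega))
    convert h0 using 2 <;> ring
  · obtain ⟨-, h1⟩ := pathColor_eq_iff.1 (h k (by omega))
    convert h1 using 2 <;> ring

theorem isWalkNonrepetitive_pathColor : IsWalkNonrepetitive pathColor :=
  isWalkNonrepetitive_of_isSquareFree (fun _ _ => div_two_mod_two_eq_of_pathColor_eq)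
    isSquareFree_pathColor

namespace Nat

variable {P : ℕ → Prop} [DecidablePred P] {t j : ℕ}

theorem lt_card_of_lt_count {n : ℕ} (h : j < count P n) (hf : (Set.ofPred P).Finite) :
    j < hf.toFinset.card :=
  h.trans_le (count_le_card hf n)

theorem count_add_of_forall_lt {k : ℕ} (hk : k ≤ t) (hP : ∀ i < t, P i ↔ P (t + i)) :
    count P (t + k) = count P t + count P k := by
  rw [count_add]
  congr 1
  simp only [count_eq_card_filter_range]
  exact congrArg Finset.card <| Finset.filter_congr fun i hi =>
    (hP i (by rw [Finset.mem_range] at hi; omega)).symm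

theorem nth_count_add_of_forall_lt (hP : ∀ i < t, P i ↔ P (t + i)) (hj : j < count P t) :
    nth P (count P t + j) = t + nth P j := by
  have hlt := nth_lt_of_lt_count hj
  have hmem : P (nth P j) := nth_mem j (lt_card_of_lt_count hj)
  calc nth P (count P t + j) = nth P (count P (t + nth P j)) := by
        rw [count_add_of_forall_lt hlt.le hP, count_nth (lt_card_of_lt_count hj)]
    _ = t + nth P j := nth_count ((hP _ hlt).1 hmem)

end Nat

section Layering

variable {V : Type*} {G : SimpleGraph V} {L : V → ℕ} {n : ℕ} {v : ℕ → V}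

theorem IsLayering.isLazyWalk (hL : IsLayering G L) (hv : IsPathSeq G n v) :
    IsLazyWalk n (fun i => L (v i)) :=
  fun i hi => (hL _ _ (hv.1 i hi)).symm

theorem IsPathSeq.reachable_induce (hv : IsPathSeq G n v) {S : Set V} {a b : ℕ} (hab : a ≤ b)
    (hb : b < n) (hS : ∀ k, a ≤ k → k ≤ b → v k ∈ S) :
    (G.induce S).Reachable ⟨v a, hS a le_rfl hab⟩ ⟨v b, hS b hab le_rfl⟩ := by
  induction b, hab using Nat.le_induction with
  | base => rfl
  | succ b hab ih =>
    exact (ih (by omega) fun k h1 h2 => hS k h1 (by omega)).trans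
      (SimpleGraph.Adj.reachable (hv.1 b hb))

theorem IsPathSeq.adj_of_lt_of_forall_lt (hsc : ShadowComplete G L) (hv : IsPathSeq G n v)
    {p q M : ℕ} (hpq : p < q) (hq : q < n) (hp : L (v p) = M) (hqM : L (v q) = M)
    (habove : ∀ k, p < k → k < q → M < L (v k)) : G.Adj (v p) (v q) := by
  obtain rfl | hpq := (Nat.succ_le_of_lt hpq).eq_or_lt
  · exact hv.1 p hq
  have hqq : q - 1 + 1 = q := by omega
  refine hsc (M + 1) (by omega) (v (p + 1)) (v (q - 1)) (v p) (v q) (habove _ (lt_add_one p) hpq)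
    (habove _ (by omega) (by omega)) (by omega) (by omega) (hv.1 p (by omega))
    (hqq ▸ (hv.1 (q - 1) (by omega)).symm)
    (hv.reachable_induce (by omega) (by omega) fun k h1 h2 => habove k h1 (by omega)) ?_
  exact fun h => hpq.ne' (by have := hv.2 p q (by omega) hq h; omega)

/-- `Nat.nth` lists the visits of the path to its lowest layer `M` in order; consecutive visits are
adjacent by shadow-completeness. -/
theorem IsPathSeq.nth_layer (hsc : ShadowComplete G L) (hv : IsPathSeq G n v) {M : ℕ}
    (hM : ∀ i < n, M ≤ L (v i)) :
    IsPathSeq G (Nat.count (fun k => L (v k) = M) n)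
      (fun j => v (Nat.nth (fun k => L (v k) = M) j)) := by
  have hlt := @Nat.lt_card_of_lt_count (fun k => L (v k) = M) _
  constructor
  · intro j hj
    refine hv.adj_of_lt_of_forall_lt hsc (M := M) (Nat.nth_lt_nth' (lt_add_one j) (hlt hj))
      (Nat.nth_lt_of_lt_count hj) (Nat.nth_mem j (hlt (n := n) (by omega))) (Nat.nth_mem _ (hlt hj))
      fun k hk1 hk2 => (hM k ?_).lt_of_ne fun hk => ?_
    · exact hk2.trans (Nat.nth_lt_of_lt_count hj)
    · exact (Nat.le_nth_of_lt_nth_succ hk2 hk.symm).not_gt hk1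
  · intro i j hi hj h
    have := hv.2 _ _ (Nat.nth_lt_of_lt_count hi) (Nat.nth_lt_of_lt_count hj) h
    rcases lt_trichotomy i j with hij | hij | hij
    · exact absurd this (Nat.nth_lt_nth' hij (hlt hj)).ne
    · exact hij
    · exact absurd this (Nat.nth_lt_nth' hij (hlt hi)).ne'

theorem IsPathSeq.exists_repetitive_in_layer (hsc : ShadowComplete G L) {t : ℕ} (ht : 0 < t)
    (hv : IsPathSeq G (2 * t) v) (hlayer : ∀ i < t, L (v i) = L (v (t + i))) :
    ∃ M s, ∃ u : ℕ → V, 0 < s ∧ (∀ j < 2 * s, L (u j) = M) ∧ IsPathSeq G (2 * s) u ∧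
      ∀ j < s, ∃ i < t, u j = v i ∧ u (s + j) = v (t + i) := by
  obtain ⟨i₀, hi₀, hmin⟩ := Finset.exists_min_image (Finset.range t) (fun i => L (v i))
    ⟨0, Finset.mem_range.2 ht⟩
  rw [Finset.mem_range] at hi₀
  generalize hM₀ : L (v i₀) = M at hmin
  have hM : ∀ i < 2 * t, M ≤ L (v i) := fun i hi => by
    rcases lt_or_ge i t with h | h
    · exact hmin i (Finset.mem_range.2 h)
    · obtain ⟨k, rfl⟩ := Nat.exists_eq_add_of_le h
      exact (hmin k (Finset.mem_range.2 (by omega))).trans_eq (hlayer k (by omega))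
  have hP : ∀ i < t, L (v i) = M ↔ L (v (t + i)) = M := fun i hi => by rw [hlayer i hi]
  have hcount : Nat.count (fun k => L (v k) = M) (2 * t) =
      2 * Nat.count (fun k => L (v k) = M) t := by
    rw [two_mul, Nat.count_add_of_forall_lt le_rfl hP, two_mul]
  have hs : 0 < Nat.count (fun k => L (v k) = M) t :=
    (Nat.count_strict_mono (p := fun k => L (v k) = M) hM₀ hi₀).trans_le' (Nat.zero_le _)
  refine ⟨M, _, fun j => v (Nat.nth (fun k => L (v k) = M) j), hs,
    fun j hj => Nat.nth_mem j (Nat.lt_card_of_lt_count (hcount ▸ hj)),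
    hcount ▸ hv.nth_layer hsc hM, fun j hj => ⟨_, Nat.nth_lt_of_lt_count hj, rfl,
      congrArg v (Nat.nth_count_add_of_forall_lt hP hj)⟩⟩

end Layering

/-- If `G` has a shadow-complete layering each of whose layers induces a
nonrepetitively `c`-colourable subgraph, then `π(G) ≤ 4c`. -/
theorem shadowComplete_pi {V : Type*} (G : SimpleGraph V) (L : V → ℕ)
    (hL : IsLayering G L) (hsc : ShadowComplete G L) (c : ℕ)
    (hlayers : ∀ i : ℕ, ∃ φ : V → Fin c, NonrepetitiveOn G {v : V | L v = i} φ) :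
    ∃ φ : V → Fin (4 * c), NonrepetitiveColoring G φ := by
  choose φ hφ using hlayers
  refine ⟨fun x => finProdFinEquiv (pathColor (L x), φ (L x) x), fun t ht v hv => ?_⟩
  by_contra! hrep
  have hmatch : ∀ i < t, pathColor (L (v i)) = pathColor (L (v (t + i))) ∧
      φ (L (v i)) (v i) = φ (L (v (t + i))) (v (t + i)) :=
    fun i hi => Prod.ext_iff.1 (finProdFinEquiv.injective (hrep i hi))
  have hlayer := isWalkNonrepetitive_pathColor t _ (hL.isLazyWalk hv) fun i hi => (hmatch i hi).1
  obtain ⟨M, s, u, hs, huM, hu, hpair⟩ := hv.exists_repetitive_in_layer hsc ht hlayer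
  obtain ⟨j, hj, hne⟩ := hφ M s hs u huM hu
  obtain ⟨i, hi, hui, husi⟩ := hpair j hj
  have hcol := (hmatch i hi).2
  rw [← hui, ← husi, huM j (by omega), huM (s + j) (by omega)] at hcol
  exact hne hcol
end

section
/- Every BFS-layering of a connected chordal graph is shadow-complete: if V_i is the set of vertices at distance exactly i from a fixed root r, then for every connected component H of the subgraph induced by V_i ∪ V_{i+1} ∪ ..., the set of vertices in V_{i−1} adjacent to H forms a clique. -/
/-- A graph is chordal if every cycle of length at least 4 has a chord:
two vertices of the cycle that are adjacent in `G` by an edge not on the cycle. -/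
def IsChordal {V : Type*} (G : SimpleGraph V) : Prop :=
  ∀ (v : V) (w : G.Walk v v), w.IsCycle → 4 ≤ w.length →
    ∃ x ∈ w.support, ∃ y ∈ w.support, G.Adj x y ∧ s(x, y) ∉ w.edges

/-!
Let `A` be the set of vertices at distance at least `i` from `r` and `B` the set of those at
distance less than `i - 1`; no edge joins `A` to `B`. The vertices `x` and `y` are joined by a walk
whose interior lies in `A` (through `u ⋯ w`) and by one whose interior lies in `B` (along shortest
paths to `r`). In a chordal graph this forces `x ~ y`: take such a pair of walks of minimal total
length. Both are paths, and unless one of them is a single edge their concatenation is a cycle of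
length at least `4`. A chord of this cycle would either shorten one of the two walks or join `A`
to `B`.
-/

namespace SimpleGraph

variable {V : Type*} {G : SimpleGraph V} {u v w x y a b z : V}

lemma Adj.dist_le_dist_add_one (h : G.Adj a b) (r : V) : G.dist r a ≤ G.dist r b + 1 := by
  rcases h.symm.diff_dist_adj (u := r) with h | h | h <;> omega

lemma Reachable.exists_walk_of_induce {s : Set V} {a b : s} (h : (G.induce s).Reachable a b) :
    ∃ p : G.Walk a b, ∀ z ∈ p.support, z ∈ s :=
  let ⟨p⟩ := h
  have hp : ∀ z ∈ (p.map (Embedding.induce s).toHom).support, z ∈ s := by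
    simp only [Walk.support_map, List.mem_map]
    rintro _ ⟨z, -, rfl⟩
    exact z.2
  ⟨_, hp⟩

namespace Walk

def InternallyIn (p : G.Walk u v) (A : Set V) : Prop :=
  ∀ z ∈ p.support, z = u ∨ z = v ∨ z ∈ A

lemma InternallyIn.mono {p p' : G.Walk u v} {A : Set V} (hp : p.InternallyIn A)
    (h : p'.support ⊆ p.support) : p'.InternallyIn A :=
  fun z hz => hp z (h hz)

lemma InternallyIn.mem {p : G.Walk u v} {A : Set V} (hp : p.InternallyIn A)
    (hz : z ∈ p.support) (hzu : z ≠ u) (hzv : z ≠ v) : z ∈ A :=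
  ((hp z hz).resolve_left hzu).resolve_left hzv

lemma InternallyIn.mem_of_notMem_support {p : G.Walk u v} {A : Set V} (hp : p.InternallyIn A)
    (hz : z ∈ p.support) (q : G.Walk u v) (hzq : z ∉ q.support) : z ∈ A :=
  hp.mem hz (by rintro rfl; exact hzq q.start_mem_support)
    (by rintro rfl; exact hzq q.end_mem_support)

/-- A chord of the cycle formed by `p` and `q` lies within one of them. -/
lemma InternallyIn.mem_support_of_adj {p q : G.Walk u v} {A B : Set V} (hp : p.InternallyIn A)
    (hq : q.InternallyIn B) (hnadj : ∀ a ∈ A, ∀ b ∈ B, ¬G.Adj a b)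
    (ha : a ∈ p.support ∨ a ∈ q.support) (hb : b ∈ p.support ∨ b ∈ q.support)
    (hab : G.Adj a b) :
    (a ∈ p.support ∧ b ∈ p.support) ∨ (a ∈ q.support ∧ b ∈ q.support) := by
  by_contra! h
  rcases ha with ha | ha <;> rcases hb with hb | hb
  · exact h.1 ha hb
  · exact hnadj a (hp.mem_of_notMem_support ha q fun haq => h.2 haq hb)
      b (hq.mem_of_notMem_support hb p (h.1 ha)) hab
  · exact hnadj b (hp.mem_of_notMem_support hb q (h.2 ha))
      a (hq.mem_of_notMem_support ha p fun hap => h.1 hap hb) hab.symm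
  · exact h.2 ha hb

lemma length_bypass_lt_or_isPath [DecidableEq V] (p : G.Walk u v) :
    p.bypass.length < p.length ∨ p.IsPath := by
  by_cases h : p.bypass.length < p.length
  · exact .inl h
  · exact .inr (p.bypass_eq_self_of_length_le_length_bypass (by omega) ▸ p.bypass_isPath)

lemma IsPath.start_notMem_support_tail {p : G.Walk u v} (hp : p.IsPath) :
    u ∉ p.support.tail :=
  (List.nodup_cons.mp (p.cons_tail_support ▸ hp.support_nodup)).1

lemma exists_shorter_of_chord_of_append (q : G.Walk u a) (r : G.Walk a v) (hb : b ∈ r.support)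
    (hab : G.Adj a b) (he : s(a, b) ∉ r.edges) :
    ∃ p : G.Walk u v, p.support ⊆ (q.append r).support ∧ p.length < (q.append r).length := by
  obtain ⟨r₁, r₂, rfl⟩ := mem_support_iff_exists_append.mp hb
  refine ⟨q.append (cons hab r₂), fun z hz => ?_, ?_⟩
  · simp only [mem_support_append_iff, support_cons, List.mem_cons] at hz ⊢
    rcases hz with hz | hz | hz
    · exact .inl hz
    · exact .inl (hz ▸ q.end_mem_support)
    · exact .inr (.inr hz)
  · have hr₁ : r₁.length ≠ 0 := fun h => hab.ne (eq_of_length_eq_zero h)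
    have hr₁' : r₁.length ≠ 1 := by
      intro h
      apply he
      rw [edges_append, List.mem_append]
      left
      cases r₁ with
      | nil => simp at h
      | cons _ r' => cases r' <;> simp_all
    simp only [length_append, length_cons]
    omega

lemma exists_shorter_of_chord (p : G.Walk u v) (ha : a ∈ p.support) (hb : b ∈ p.support)
    (hab : G.Adj a b) (he : s(a, b) ∉ p.edges) :
    ∃ p' : G.Walk u v, p'.support ⊆ p.support ∧ p'.length < p.length := by
  obtain ⟨q, r, rfl⟩ := mem_support_iff_exists_append.mp ha
  rw [edges_append, List.mem_append, not_or] at he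
  rcases (mem_support_append_iff q r).mp hb with hbq | hbr
  · obtain ⟨p', hsub, hlt⟩ := exists_shorter_of_chord_of_append r.reverse q.reverse
      (by simpa using hbq) hab (by simpa using he.1)
    refine ⟨p'.reverse, fun z hz => ?_, by simpa [add_comm] using hlt⟩
    simpa [or_comm] using hsub (by simpa using hz)
  · exact exists_shorter_of_chord_of_append q r hbr hab he.2

lemma IsPath.isCycle_append_reverse_of_internallyIn {p q : G.Walk u v} {A B : Set V}
    (hpp : p.IsPath) (hqp : q.IsPath) (hAB : Disjoint A B) (hp : p.InternallyIn A)
    (hq : q.InternallyIn B) (hlen : 1 < p.length) : (p.append q.reverse).IsCycle := by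
  have hqp' := (isPath_reverse_iff q).mpr hqp
  refine hpp.isCycle_append hqp' (fun z hzp hzq => ?_) (.inl hlen)
  have hzu : z ≠ u := fun h => hpp.start_notMem_support_tail (h ▸ hzp)
  have hzv : z ≠ v := fun h => hqp'.start_notMem_support_tail (h ▸ hzq)
  have hzq' : z ∈ q.support := by simpa using List.mem_of_mem_tail hzq
  exact Set.disjoint_left.mp hAB (hp.mem (List.mem_of_mem_tail hzp) hzu hzv)
    (hq.mem hzq' hzu hzv)

lemma dist_lt_of_length_eq_dist (p : G.Walk u v) (hp : p.length = G.dist u v)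
    (hz : z ∈ p.support) (hzv : z ≠ v) : G.dist u z < G.dist u v := by
  classical
  calc G.dist u z ≤ (p.takeUntil z hz).length := dist_le _
    _ < p.length := length_takeUntil_lt_length hz hzv
    _ = G.dist u v := hp

lemma internallyIn_cons_append_cons {A : Set V} (hxu : G.Adj x u) (p : G.Walk u w)
    (hwy : G.Adj w y) (hp : ∀ z ∈ p.support, z ∈ A) :
    (cons hxu (p.append (cons hwy nil))).InternallyIn A := by
  intro z hz
  simp only [support_cons, support_nil, List.mem_cons, mem_support_append_iff,
    List.not_mem_nil, or_false] at hz
  rcases hz with hz | hz | rfl | hz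
  · exact .inl hz
  · exact .inr (.inr (hp z hz))
  · exact .inr (.inr (hp z p.end_mem_support))
  · exact .inr (.inl hz)

lemma internallyIn_reverse_append_of_length_eq_dist {r : V} (px : G.Walk r x) (py : G.Walk r y)
    (hpx : px.length = G.dist r x) (hpy : py.length = G.dist r y)
    (hxy : G.dist r x = G.dist r y) :
    (px.reverse.append py).InternallyIn {z | G.dist r z < G.dist r x} := by
  intro z hz
  rw [mem_support_append_iff, support_reverse, List.mem_reverse] at hz
  rcases hz with hz | hz
  · by_cases hzx : z = x
    · exact .inl hzx
    · exact .inr (.inr (px.dist_lt_of_length_eq_dist hpx hz hzx))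
  · by_cases hzy : z = y
    · exact .inr (.inl hzy)
    · exact .inr (.inr (hxy ▸ py.dist_lt_of_length_eq_dist hpy hz hzy))

end Walk

end SimpleGraph

open SimpleGraph Walk

theorem IsChordal.adj_of_walks_internallyIn {V : Type*} {G : SimpleGraph V} (hG : IsChordal G)
    {A B : Set V} (hAB : Disjoint A B) (hnadj : ∀ a ∈ A, ∀ b ∈ B, ¬G.Adj a b) {x y : V}
    (hxy : x ≠ y) {p q : G.Walk x y} (hp : p.InternallyIn A) (hq : q.InternallyIn B) :
    G.Adj x y := by
  classical
  induction hn : p.length + q.length using Nat.strong_induction_on generalizing p q with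
  | _ n ih =>
  have shorter : ∀ {p' q' : G.Walk x y}, p'.InternallyIn A → q'.InternallyIn B →
      p'.length + q'.length < n → G.Adj x y :=
    fun hp' hq' hlt => ih _ hlt hp' hq' rfl
  rcases p.length_bypass_lt_or_isPath with hpb | hpp
  · exact shorter (hp.mono p.support_bypass_subset_support) hq (by omega)
  rcases q.length_bypass_lt_or_isPath with hqb | hqp
  · exact shorter hp (hq.mono q.support_bypass_subset_support) (by omega)
  have hp0 : p.length ≠ 0 := fun h => hxy (eq_of_length_eq_zero h)
  have hq0 : q.length ≠ 0 := fun h => hxy (eq_of_length_eq_zero h)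
  by_cases hp1 : p.length = 1
  · exact adj_of_length_eq_one hp1
  by_cases hq1 : q.length = 1
  · exact adj_of_length_eq_one hq1
  have hcyc := hpp.isCycle_append_reverse_of_internallyIn hqp hAB hp hq (by omega)
  obtain ⟨a, ha, b, hb, hab, he⟩ :=
    hG x _ hcyc (by simp only [length_append, length_reverse]; omega)
  rw [edges_append, List.mem_append, not_or, edges_reverse, List.mem_reverse] at he
  simp only [mem_support_append_iff, support_reverse, List.mem_reverse] at ha hb
  rcases hp.mem_support_of_adj hq hnadj ha hb hab with ⟨ha, hb⟩ | ⟨ha, hb⟩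
  · obtain ⟨p', hsub, hlt⟩ := p.exists_shorter_of_chord ha hb hab he.1
    exact shorter (hp.mono hsub) hq (by omega)
  · obtain ⟨q', hsub, hlt⟩ := q.exists_shorter_of_chord ha hb hab he.2
    exact shorter hp (hq.mono hsub) (by omega)

theorem bfs_layering_shadowComplete_general {V : Type*} (G : SimpleGraph V)
    (hconn : G.Connected) (hchordal : IsChordal G) (r : V)
    (i : ℕ) (u w x y : V)
    (hu : i ≤ G.dist r u) (hw : i ≤ G.dist r w)
    (hx : G.dist r x = i - 1) (hy : G.dist r y = i - 1)
    (hxu : G.Adj x u) (hyw : G.Adj y w)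
    (hreach : (G.induce {z : V | i ≤ G.dist r z}).Reachable ⟨u, hu⟩ ⟨w, hw⟩)
    (hxy : x ≠ y) : G.Adj x y := by
  obtain ⟨p, hp⟩ : ∃ p : G.Walk u w, ∀ z ∈ p.support, i ≤ G.dist r z :=
    hreach.exists_walk_of_induce
  obtain ⟨px, hpx⟩ := hconn.exists_walk_length_eq_dist r x
  obtain ⟨py, hpy⟩ := hconn.exists_walk_length_eq_dist r y
  have hlower := px.internallyIn_reverse_append_of_length_eq_dist py hpx hpy (hx.trans hy.symm)
  rw [hx] at hlower
  refine hchordal.adj_of_walks_internallyIn ?_ ?_ hxy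
    (internallyIn_cons_append_cons hxu p hyw.symm hp) hlower
  · exact Set.disjoint_left.mpr fun z (hz : i ≤ _) (hz' : _ < i - 1) => by omega
  · intro a (ha : i ≤ _) b (hb : _ < i - 1) hab
    have := hab.dist_le_dist_add_one r
    omega

/-- Every BFS-layering of a connected chordal graph is shadow-complete: with
`V_i = {v | dist r v = i}`, for every connected component `H` of the subgraph
induced by the layers `≥ i`, the vertices of layer `i-1` adjacent to `H` form
a clique. -/
theorem bfs_layering_shadowComplete {V : Type*} (G : SimpleGraph V)
    (hconn : G.Connected) (hchordal : IsChordal G) (r : V)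
    (i : ℕ) (hi : 1 ≤ i) (u w x y : V)
    (hu : i ≤ G.dist r u) (hw : i ≤ G.dist r w)
    (hx : G.dist r x = i - 1) (hy : G.dist r y = i - 1)
    (hxu : G.Adj x u) (hyw : G.Adj y w)
    (hreach : (G.induce {z : V | i ≤ G.dist r z}).Reachable ⟨u, hu⟩ ⟨w, hw⟩)
    (hxy : x ≠ y) : G.Adj x y :=
  bfs_layering_shadowComplete_general G hconn hchordal r i u w x y hu hw hx hy hxu hyw hreach hxy
end

section
/- A colouring of a tree T is walk-nonrepetitive if and only if it is path-nonrepetitive and distance-2. -/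
section TreeWalkAux

variable {V C : Type*} {T : SimpleGraph V} {φ : V → C}

private lemma tree_mem_support_dist_le {x y r : V} (p : T.Walk y r) (hx : x ∈ p.support) :
    T.dist x r ≤ p.length := by
  classical
  exact le_trans (SimpleGraph.dist_le (p.dropUntil x hx))
    (SimpleGraph.Walk.length_dropUntil_le p hx)

private lemma tree_adj_step (h : T.IsTree) (r : V) {x y : V} (a : T.Adj x y) :
    T.dist y r = T.dist x r + 1 ∨ T.dist x r = T.dist y r + 1 := by
  classical
  by_contra hcon
  push_neg at hcon
  have hxy : T.dist x y = 1 := SimpleGraph.dist_eq_one_iff_adj.mpr a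
  have hyx : T.dist y x = 1 := by rw [SimpleGraph.dist_comm]; exact hxy
  have h1 : T.dist y r ≤ T.dist x r + 1 := by
    have := h.isConnected.dist_triangle (u := y) (v := x) (w := r)
    rw [hyx, Nat.add_comm] at this; exact this
  have h2 : T.dist x r ≤ T.dist y r + 1 := by
    have := h.isConnected.dist_triangle (u := x) (v := y) (w := r)
    rw [hxy, Nat.add_comm] at this; exact this
  have heq : T.dist x r = T.dist y r := by omega
  obtain ⟨p, hp, hl⟩ := h.isConnected.exists_path_of_dist y r
  by_cases hx : x ∈ p.support
  · have t1 : T.dist x r ≤ (p.dropUntil x hx).length := SimpleGraph.dist_le _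
    have t2 : (p.takeUntil x hx).length + (p.dropUntil x hx).length = p.length := by
      rw [← SimpleGraph.Walk.length_append]
      exact congrArg SimpleGraph.Walk.length (p.take_spec hx)
    have t3 : (p.takeUntil x hx).length ≠ 0 := by
      intro h0
      exact a.ne' (SimpleGraph.Walk.eq_of_length_eq_zero h0)
    omega
  · have hq : (SimpleGraph.Walk.cons a p).IsPath := by
      rw [SimpleGraph.Walk.cons_isPath_iff]
      exact ⟨hp, hx⟩
    obtain ⟨p2, hp2, hl2⟩ := h.isConnected.exists_path_of_dist x r
    have := (h.existsUnique_path x r).unique hq hp2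
    have hlen := congrArg SimpleGraph.Walk.length this
    simp only [SimpleGraph.Walk.length_cons] at hlen
    omega

private lemma tree_unique_parent (h : T.IsTree) (r : V) {x y z : V}
    (ay : T.Adj x y) (az : T.Adj x z)
    (hy : T.dist y r + 1 = T.dist x r) (hz : T.dist z r + 1 = T.dist x r) : y = z := by
  classical
  obtain ⟨py, hpy, hly⟩ := h.isConnected.exists_path_of_dist y r
  obtain ⟨pz, hpz, hlz⟩ := h.isConnected.exists_path_of_dist z r
  have hxy : x ∉ py.support := by
    intro hx
    have := tree_mem_support_dist_le py hx
    omega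
  have hxz : x ∉ pz.support := by
    intro hx
    have := tree_mem_support_dist_le pz hx
    omega
  have hqy : (SimpleGraph.Walk.cons ay py).IsPath := by
    rw [SimpleGraph.Walk.cons_isPath_iff]; exact ⟨hpy, hxy⟩
  have hqz : (SimpleGraph.Walk.cons az pz).IsPath := by
    rw [SimpleGraph.Walk.cons_isPath_iff]; exact ⟨hpz, hxz⟩
  have heq := (h.existsUnique_path x r).unique hqy hqz
  have h1 := congrArg (fun w => SimpleGraph.Walk.getVert w 1) heq
  simpa [SimpleGraph.Walk.getVert_cons_succ, SimpleGraph.Walk.getVert_zero] using h1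

private lemma d2_two_nbr (hd : Distance2Coloring T φ) {x a b : V}
    (ha : T.Adj x a) (hb : T.Adj x b) (hcol : φ a = φ b) : a = b := by
  by_contra hne
  exact hd a b hne (Or.inr ⟨x, ha.symm, hb⟩) hcol

private lemma propagation (hd : Distance2Coloring T φ) {t : ℕ} {v : ℕ → V}
    (hw : IsWalkSeq T (2 * t) v) (hc : ∀ i < t, φ (v i) = φ (v (t + i)))
    {j : ℕ} (hj : j < t) (hcoin : v j = v (t + j)) : ∀ i < t, v i = v (t + i) := by
  have fwd : ∀ d, j + d < t → v (j + d) = v (t + (j + d)) := by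
    intro d
    induction d with
    | zero => intro _; simpa using hcoin
    | succ d ih =>
      intro hdlt
      have hprev := ih (by omega)
      have ha : T.Adj (v (t + (j + d))) (v (j + d + 1)) := by
        rw [← hprev]; exact hw (j + d) (by omega)
      have hb : T.Adj (v (t + (j + d))) (v (t + (j + d) + 1)) := hw (t + (j + d)) (by omega)
      have hcol : φ (v (j + d + 1)) = φ (v (t + (j + d) + 1)) := by
        have := hc (j + d + 1) (by omega)
        have e : t + (j + d) + 1 = t + (j + d + 1) := by omega
        rw [e]; exact this
      have := d2_two_nbr hd ha hb hcol
      have e : t + (j + d) + 1 = t + (j + (d + 1)) := by omega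
      rw [e] at this
      have e2 : j + d + 1 = j + (d + 1) := by omega
      rw [e2] at this
      exact this
  have bwd : ∀ d, d ≤ j → v (j - d) = v (t + (j - d)) := by
    intro d
    induction d with
    | zero => intro _; simpa using hcoin
    | succ d ih =>
      intro hdle
      have hprev := ih (by omega)
      set k := j - (d + 1) with hk
      have hk1 : j - d = k + 1 := by omega
      rw [hk1] at hprev
      have ha : T.Adj (v (k + 1)) (v k) := (hw k (by omega)).symm
      have hb : T.Adj (v (k + 1)) (v (t + k)) := by
        rw [hprev]
        have : T.Adj (v (t + k)) (v (t + k + 1)) := hw (t + k) (by omega)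
        have e : t + k + 1 = t + (k + 1) := by omega
        rw [e] at this
        exact this.symm
      exact d2_two_nbr hd ha hb (hc k (by omega))
  intro i hi
  rcases le_or_gt i j with hle | hlt
  · have := bwd (j - i) (by omega)
    have e : j - (j - i) = i := by omega
    rwa [e] at this
  · have := fwd (i - j) (by omega)
    have e : j + (i - j) = i := by omega
    rwa [e] at this

private lemma surgery {t : ℕ} {v : ℕ → V}
    (hw : IsWalkSeq T (2 * t) v) (hc : ∀ i < t, φ (v i) = φ (v (t + i)))
    {i : ℕ} (hi : i + 2 < t) (hsp : v i = v (i + 2))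
    (hm : v (t + i) = v (t + i + 2))
    (IH : ∀ w : ℕ → V, IsWalkSeq T (2 * (t - 2)) w →
      (∀ j < t - 2, φ (w j) = φ (w ((t - 2) + j))) → ∀ j < t - 2, w j = w ((t - 2) + j)) :
    v 0 = v t := by
  have ht3 : 3 ≤ t := by omega
  set u : ℕ → V := fun k =>
    v (k + (if i < k then 2 else 0) + (if t + i - 2 < k then 2 else 0)) with hu
  have ulow : ∀ k, k ≤ i → u k = v k := by
    intro k hk
    simp only [hu]
    rw [if_neg (by omega), if_neg (by omega)]
    norm_num
  have umid : ∀ k, i < k → k ≤ t + i - 2 → u k = v (k + 2) := by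
    intro k h1 h2
    simp only [hu]
    rw [if_pos h1, if_neg (by omega)]
  have uhigh : ∀ k, t + i - 2 < k → u k = v (k + 4) := by
    intro k h1
    simp only [hu]
    rw [if_pos (by omega), if_pos h1]
  have hwu : IsWalkSeq T (2 * (t - 2)) u := by
    intro k hk
    rcases lt_trichotomy k i with h1 | h1 | h1
    · rw [ulow k (by omega), ulow (k + 1) (by omega)]
      exact hw k (by omega)
    · subst h1
      rw [ulow k le_rfl, umid (k + 1) (by omega) (by omega), hsp]
      have := hw (k + 2) (by omega)
      have e : k + 2 + 1 = k + 1 + 2 := by omega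
      rwa [e] at this
    · rcases lt_trichotomy k (t + i - 2) with h2 | h2 | h2
      · rw [umid k h1 (by omega), umid (k + 1) (by omega) (by omega)]
        have := hw (k + 2) (by omega)
        have e : k + 2 + 1 = k + 1 + 2 := by omega
        rwa [e] at this
      · subst h2
        rw [umid _ h1 le_rfl, uhigh _ (by omega)]
        have e1 : t + i - 2 + 2 = t + i := by omega
        have e2 : t + i - 2 + 1 + 4 = t + i + 3 := by omega
        rw [e1, e2, hm]
        exact hw (t + i + 2) (by omega)
      · rw [uhigh k h2, uhigh (k + 1) (by omega)]
        have := hw (k + 4) (by omega)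
        have e : k + 4 + 1 = k + 1 + 4 := by omega
        rwa [e] at this
  have hcu : ∀ j < t - 2, φ (u j) = φ (u ((t - 2) + j)) := by
    intro j hj
    rcases le_or_gt j i with h1 | h1
    · rw [ulow j h1, umid (t - 2 + j) (by omega) (by omega)]
      have e : t - 2 + j + 2 = t + j := by omega
      rw [e]
      exact hc j (by omega)
    · rw [umid j h1 (by omega), uhigh (t - 2 + j) (by omega)]
      have e : t - 2 + j + 4 = t + (j + 2) := by omega
      rw [e]
      exact hc (j + 2) (by omega)
  have hb := IH u hwu hcu 0 (by omega)
  rw [ulow 0 (by omega)] at hb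
  rw [umid (t - 2 + 0) (by omega) (by omega)] at hb
  have e : t - 2 + 0 + 2 = t := by omega
  rwa [e] at hb

private lemma heightDown (h : T.IsTree) {t m : ℕ} {v : ℕ → V}
    (ht : 0 < t) (hm : m ≤ t) (hanch : v m = v t)
    (hw : IsWalkSeq T (2 * t) v)
    (hsf : ∀ j, j + 2 ≤ m → v (m - j - 2) = v (m - j) → False) :
    ∀ j ≤ m, T.dist (v (m - j)) (v t) = j := by
  have aux : ∀ j, j + 1 ≤ m →
      T.dist (v (m - j)) (v t) = j ∧ T.dist (v (m - (j + 1))) (v t) = j + 1 := by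
    intro j
    induction j with
    | zero =>
      intro h1
      constructor
      · simpa [hanch] using SimpleGraph.dist_self T
      · have ha : T.Adj (v (m - 1)) (v m) := by
          have := hw (m - 1) (by omega)
          have e : m - 1 + 1 = m := by omega
          rwa [e] at this
        rw [hanch] at ha
        simpa using SimpleGraph.dist_eq_one_iff_adj.mpr ha
    | succ j ih =>
      intro h1
      have ⟨e1, e2⟩ := ih (by omega)
      refine ⟨e2, ?_⟩
      show T.dist (v (m - (j + 2))) (v t) = j + 2
      have ha : T.Adj (v (m - (j + 2))) (v (m - (j + 1))) := by
        have := hw (m - (j + 2)) (by omega)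
        have e : m - (j + 2) + 1 = m - (j + 1) := by omega
        rwa [e] at this
      have hstep := tree_adj_step h (v t) ha
      rcases hstep with hs | hs
      · exfalso
        have heqp : v (m - (j + 2)) = v (m - j) := by
          refine tree_unique_parent h (v t) (x := v (m - (j + 1))) ha.symm ?_ (by omega) (by omega)
          have := hw (m - (j + 1)) (by omega)
          have e : m - (j + 1) + 1 = m - j := by omega
          rwa [e] at this
        exact hsf j (by omega) (by simpa [show m - j - 2 = m - (j + 2) by omega] using heqp)
      · omega
  intro j hj
  rcases Nat.eq_zero_or_pos j with h0 | h0
  · subst h0; simpa [hanch] using SimpleGraph.dist_self T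
  · have := (aux (j - 1) (by omega)).2
    have e : j - 1 + 1 = j := by omega
    rwa [e] at this

private lemma heightUp (h : T.IsTree) {t : ℕ} {v : ℕ → V}
    (ht : 0 < t) (hw : IsWalkSeq T (2 * t) v)
    (hni : ∀ i, i + 2 < 2 * t → v i = v (i + 2) → i + 2 = t ∨ i + 1 = t) :
    ∀ j < t, T.dist (v (t + j)) (v t) = j := by
  have aux : ∀ j, j + 1 < t →
      T.dist (v (t + j)) (v t) = j ∧ T.dist (v (t + (j + 1))) (v t) = j + 1 := by
    intro j
    induction j with
    | zero =>
      intro h1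
      refine ⟨by simpa using SimpleGraph.dist_self T, ?_⟩
      have ha : T.Adj (v t) (v (t + 1)) := hw t (by omega)
      simpa using SimpleGraph.dist_eq_one_iff_adj.mpr ha.symm
    | succ j ih =>
      intro h1
      have ⟨e1, e2⟩ := ih (by omega)
      refine ⟨e2, ?_⟩
      show T.dist (v (t + (j + 2))) (v t) = j + 2
      have ha : T.Adj (v (t + (j + 1))) (v (t + (j + 2))) := by
        have := hw (t + j + 1) (by omega)
        have e : t + j + 1 + 1 = t + (j + 2) := by omega
        have e' : t + j + 1 = t + (j + 1) := by omega
        rwa [e, e'] at this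
      have hstep := tree_adj_step h (v t) ha
      rcases hstep with hs | hs
      · omega
      · exfalso
        have heqp : v (t + (j + 2)) = v (t + j) := by
          refine tree_unique_parent h (v t) (x := v (t + (j + 1))) ha ?_ (by omega) (by omega)
          have := hw (t + j) (by omega)
          have e : t + j + 1 = t + (j + 1) := by omega
          rw [e] at this
          exact this.symm
        have := hni (t + j) (by omega)
          (by simpa [show t + j + 2 = t + (j + 2) by omega] using heqp.symm)
        omega
  intro j hj
  rcases Nat.eq_zero_or_pos j with h0 | h0
  · subst h0; simpa using SimpleGraph.dist_self T
  · have := (aux (j - 1) (by omega)).2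
    have e : j - 1 + 1 = j := by omega
    rwa [e] at this

private lemma core (h : T.IsTree) (hd : Distance2Coloring T φ)
    (hnr : NonrepetitiveColoring T φ)
    {t : ℕ} (ht : 0 < t) {v : ℕ → V}
    (hw : IsWalkSeq T (2 * t) v)
    (hc : ∀ i < t, φ (v i) = φ (v (t + i)))
    (hni : ∀ i, i + 2 < 2 * t → v i = v (i + 2) → i + 2 = t ∨ i + 1 = t)
    (hn2 : ¬(2 ≤ t ∧ v (t - 2) = v t)) : False := by
  classical
  have hsfL : ∀ j, j + 2 ≤ t → v (t - j - 2) = v (t - j) → False := by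
    intro j hj heq
    rcases Nat.eq_zero_or_pos j with h0 | h0
    · subst h0
      exact hn2 ⟨by omega, by simpa using heq⟩
    · have := hni (t - j - 2) (by omega)
        (by rwa [show t - j - 2 + 2 = t - j by omega])
      omega
  have hL0 := heightDown h ht le_rfl rfl hw hsfL
  have hL : ∀ a, a ≤ t → T.dist (v a) (v t) = t - a := by
    intro a ha
    have := hL0 (t - a) (by omega)
    rwa [show t - (t - a) = a by omega] at this
  have hR := heightUp h ht hw hni
  set Z : ℕ → Prop := fun j => ∀ k ≤ j, v (t + k) = v (t - k) with hZdef
  set σ := Nat.findGreatest Z (t - 1) with hσdef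
  have hZ0 : Z 0 := by
    intro k hk
    have : k = 0 := by omega
    subst this; simp
  have hZσ : Z σ := Nat.findGreatest_spec (Nat.zero_le _) hZ0
  have hσle : σ ≤ t - 1 := Nat.findGreatest_le _
  rcases le_or_gt t (2 * σ) with h2σ | h2σ
  · rcases Nat.even_or_odd t with he | ho
    · obtain ⟨m, hm⟩ := he
      have hm1 : 1 ≤ m := by omega
      have hz := hZσ (m - 1) (by omega)
      have hcol : φ (v (m - 1)) = φ (v (m + 1)) := by
        have h1 := hc (m - 1) (by omega)
        rwa [hz, show t - (m - 1) = m + 1 by omega] at h1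
      have hne : v (m - 1) ≠ v (m + 1) := by
        intro heq
        have d1 := hL (m - 1) (by omega)
        have d2 := hL (m + 1) (by omega)
        rw [heq] at d1; omega
      refine hd _ _ hne (Or.inr ⟨v m, ?_, ?_⟩) hcol
      · have := hw (m - 1) (by omega)
        rwa [show m - 1 + 1 = m by omega] at this
      · exact hw m (by omega)
    · obtain ⟨m, hm⟩ := ho
      have hz := hZσ m (by omega)
      have hcol : φ (v m) = φ (v (m + 1)) := by
        have h1 := hc m (by omega)
        rwa [hz, show t - m = m + 1 by omega] at h1
      have hadj : T.Adj (v m) (v (m + 1)) := hw m (by omega)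
      exact hd _ _ hadj.ne (Or.inl hadj) hcol
  · have hbrk : σ + 1 ≤ t - 1 → v (t + (σ + 1)) ≠ v (t - (σ + 1)) := by
      intro hle heq
      have hZs : Z (σ + 1) := by
        intro k hk
        rcases Nat.lt_or_ge k (σ + 1) with h' | h'
        · exact hZσ k (by omega)
        · have : k = σ + 1 := by omega
          subst this; exact heq
      have := Nat.le_findGreatest hle hZs
      omega
    set P : ℕ → V := fun k => if k ≤ t - σ then v k else v (k + 2 * σ) with hP
    have descent : ∀ b, σ + 1 ≤ b → b < t → ∀ a, a + b = t → v a = v (t + b) → False := by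
      intro b hb1 hb2 a hab heq
      have inner : ∀ m, m ≤ b - (σ + 1) → v (a + m) = v (t + b - m) := by
        intro m
        induction m with
        | zero => intro _; simpa using heq
        | succ m ih =>
          intro hm
          have hprev := ih (by omega)
          have hdx : T.dist (v (a + m)) (v t) = b - m := by
            have h' := hL (a + m) (by omega); omega
          have hay : T.Adj (v (a + m)) (v (a + m + 1)) := hw (a + m) (by omega)
          have haz : T.Adj (v (a + m)) (v (t + b - m - 1)) := by
            rw [hprev]
            have h' := hw (t + b - m - 1) (by omega)
            rw [show t + b - m - 1 + 1 = t + b - m by omega] at h'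
            exact h'.symm
          have hdy : T.dist (v (a + m + 1)) (v t) + 1 = T.dist (v (a + m)) (v t) := by
            have h' := hL (a + m + 1) (by omega); omega
          have hdz : T.dist (v (t + b - m - 1)) (v t) + 1 = T.dist (v (a + m)) (v t) := by
            have h' := hR (b - m - 1) (by omega)
            rw [show t + (b - m - 1) = t + b - m - 1 by omega] at h'
            omega
          have hyz := tree_unique_parent h (v t) hay haz hdy hdz
          rw [show a + (m + 1) = a + m + 1 by omega,
            show t + b - (m + 1) = t + b - m - 1 by omega]
          exact hyz
      have hfin := inner (b - (σ + 1)) le_rfl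
      rw [show a + (b - (σ + 1)) = t - (σ + 1) by omega,
        show t + b - (b - (σ + 1)) = t + (σ + 1) by omega] at hfin
      exact hbrk (by omega) hfin.symm
    have key : ∀ k1 k2, k1 ≤ t - σ → t - σ < k2 → k2 < 2 * (t - σ) → P k1 = P k2 → False := by
      intro k1 k2 h1 h2 h3 heq
      simp only [hP] at heq
      rw [if_pos h1, if_neg (by omega)] at heq
      have d1 := hL k1 (by omega)
      have d2 : T.dist (v (k2 + 2 * σ)) (v t) = k2 + 2 * σ - t := by
        have h' := hR (k2 + 2 * σ - t) (by omega)
        rwa [show t + (k2 + 2 * σ - t) = k2 + 2 * σ by omega] at h'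
      have hde : t - k1 = k2 + 2 * σ - t := by rw [← d1, ← d2, heq]
      refine descent (k2 + 2 * σ - t) (by omega) (by omega) k1 (by omega) ?_
      rwa [show t + (k2 + 2 * σ - t) = k2 + 2 * σ by omega]
    have Pinj : ∀ k1 k2, k1 < 2 * (t - σ) → k2 < 2 * (t - σ) → P k1 = P k2 → k1 = k2 := by
      intro k1 k2 h1 h2 heq
      rcases le_or_gt k1 (t - σ) with c1 | c1 <;> rcases le_or_gt k2 (t - σ) with c2 | c2
      · simp only [hP] at heq
        rw [if_pos c1, if_pos c2] at heq
        have d1 := hL k1 (by omega)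
        have d2 := hL k2 (by omega)
        rw [heq] at d1; omega
      · exact (key k1 k2 c1 c2 h2 heq).elim
      · exact (key k2 k1 c2 c1 h1 heq.symm).elim
      · simp only [hP] at heq
        rw [if_neg (by omega), if_neg (by omega)] at heq
        have d1 : T.dist (v (k1 + 2 * σ)) (v t) = k1 + 2 * σ - t := by
          have h' := hR (k1 + 2 * σ - t) (by omega)
          rwa [show t + (k1 + 2 * σ - t) = k1 + 2 * σ by omega] at h'
        have d2 : T.dist (v (k2 + 2 * σ)) (v t) = k2 + 2 * σ - t := by
          have h' := hR (k2 + 2 * σ - t) (by omega)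
          rwa [show t + (k2 + 2 * σ - t) = k2 + 2 * σ by omega] at h'
        rw [heq] at d1; omega
    have Padj : ∀ k, k + 1 < 2 * (t - σ) → T.Adj (P k) (P (k + 1)) := by
      intro k hk
      rcases le_or_gt (k + 1) (t - σ) with c | c
      · simp only [hP]
        rw [if_pos (by omega), if_pos c]
        exact hw k (by omega)
      · rcases le_or_gt k (t - σ) with c2 | c2
        · have hk2 : k = t - σ := by omega
          subst hk2
          simp only [hP]
          rw [if_pos le_rfl, if_neg (by omega)]
          rw [← hZσ σ le_rfl, show t - σ + 1 + 2 * σ = t + σ + 1 by omega]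
          exact hw (t + σ) (by omega)
        · simp only [hP]
          rw [if_neg (by omega), if_neg (by omega)]
          have h' := hw (k + 2 * σ) (by omega)
          rwa [show k + 2 * σ + 1 = k + 1 + 2 * σ by omega] at h'
    have htσ : 0 < t - 2 * σ := by omega
    have hps : IsPathSeq T (2 * (t - 2 * σ)) (fun j => P (σ + j)) := by
      constructor
      · intro i hi
        have h' := Padj (σ + i) (by omega)
        rwa [show σ + i + 1 = σ + (i + 1) by omega] at h'
      · intro i j hi hj heq
        have := Pinj (σ + i) (σ + j) (by omega) (by omega) heq
        omega
    obtain ⟨j, hj, hne⟩ := hnr (t - 2 * σ) htσ _ hps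
    apply hne
    show φ (P (σ + j)) = φ (P (σ + (t - 2 * σ + j)))
    rw [show σ + (t - 2 * σ + j) = t - σ + j by omega]
    have l1 : P (σ + j) = v (σ + j) := by
      simp only [hP]; rw [if_pos (by omega)]
    have l2 : φ (P (t - σ + j)) = φ (v (t + (σ + j))) := by
      rcases Nat.eq_zero_or_pos j with h0 | h0
      · subst h0
        simp only [hP]
        rw [show t - σ + 0 = t - σ by omega, if_pos le_rfl, ← hZσ σ le_rfl]
        rfl
      · simp only [hP]
        rw [if_neg (by omega), show t - σ + j + 2 * σ = t + (σ + j) by omega]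
    rw [l1, l2]
    exact hc (σ + j) (by omega)

private lemma caseA (h : T.IsTree) (hd : Distance2Coloring T φ)
    (hnr : NonrepetitiveColoring T φ)
    {t : ℕ} (ht3 : 3 ≤ t) {v : ℕ → V}
    (hw : IsWalkSeq T (2 * t) v)
    (hc : ∀ i < t, φ (v i) = φ (v (t + i)))
    (hni : ∀ i, i + 2 < 2 * t → v i = v (i + 2) → i + 2 = t ∨ i + 1 = t)
    (hsp2 : v (t - 2) = v t) (hsp1 : v (t - 1) = v (t + 1)) : False := by
  classical
  have ht : 0 < t := by omega
  have hsf : ∀ j, j + 2 ≤ t - 2 → v (t - 2 - j - 2) = v (t - 2 - j) → False := by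
    intro j hj heq
    have := hni (t - 2 - j - 2) (by omega)
      (by rwa [show t - 2 - j - 2 + 2 = t - 2 - j by omega])
    omega
  have hL0 := heightDown h ht (by omega : t - 2 ≤ t) hsp2 hw hsf
  have hL : ∀ a, a ≤ t - 2 → T.dist (v a) (v t) = t - 2 - a := by
    intro a ha
    have := hL0 (t - 2 - a) (by omega)
    rwa [show t - 2 - (t - 2 - a) = a by omega] at this
  have hR := heightUp h ht hw hni
  have hdiv : v (t - 3) ≠ v (t + 1) := by
    intro heq
    have h' : v (t - 3) = v (t - 1) := heq.trans hsp1.symm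
    have := hni (t - 3) (by omega) (by rwa [show t - 3 + 2 = t - 1 by omega])
    omega
  have descent : ∀ b, 1 ≤ b → b < t → ∀ a, a + b = t - 2 → v a = v (t + b) → False := by
    intro b hb1 hb2 a hab heq
    have inner : ∀ m, m ≤ b - 1 → v (a + m) = v (t + b - m) := by
      intro m
      induction m with
      | zero => intro _; simpa using heq
      | succ m ih =>
        intro hm
        have hprev := ih (by omega)
        have hdx : T.dist (v (a + m)) (v t) = b - m := by
          have h' := hL (a + m) (by omega); omega
        have hay : T.Adj (v (a + m)) (v (a + m + 1)) := hw (a + m) (by omega)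
        have haz : T.Adj (v (a + m)) (v (t + b - m - 1)) := by
          rw [hprev]
          have h' := hw (t + b - m - 1) (by omega)
          rw [show t + b - m - 1 + 1 = t + b - m by omega] at h'
          exact h'.symm
        have hdy : T.dist (v (a + m + 1)) (v t) + 1 = T.dist (v (a + m)) (v t) := by
          have h' := hL (a + m + 1) (by omega); omega
        have hdz : T.dist (v (t + b - m - 1)) (v t) + 1 = T.dist (v (a + m)) (v t) := by
          have h' := hR (b - m - 1) (by omega)
          rw [show t + (b - m - 1) = t + b - m - 1 by omega] at h'
          omega
        have hyz := tree_unique_parent h (v t) hay haz hdy hdz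
        rw [show a + (m + 1) = a + m + 1 by omega,
          show t + b - (m + 1) = t + b - m - 1 by omega]
        exact hyz
    have hfin := inner (b - 1) le_rfl
    rw [show a + (b - 1) = t - 3 by omega,
      show t + b - (b - 1) = t + 1 by omega] at hfin
    exact hdiv hfin
  set P : ℕ → V := fun k => if k ≤ t - 2 then v k else v (k + 2) with hP
  have key : ∀ k1 k2, k1 ≤ t - 2 → t - 2 < k2 → k2 < 2 * (t - 1) → P k1 = P k2 → False := by
    intro k1 k2 h1 h2 h3 heq
    simp only [hP] at heq
    rw [if_pos h1, if_neg (by omega)] at heq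
    have d1 := hL k1 (by omega)
    have d2 : T.dist (v (k2 + 2)) (v t) = k2 + 2 - t := by
      have h' := hR (k2 + 2 - t) (by omega)
      rwa [show t + (k2 + 2 - t) = k2 + 2 by omega] at h'
    have hde : t - 2 - k1 = k2 + 2 - t := by rw [← d1, ← d2, heq]
    refine descent (k2 + 2 - t) (by omega) (by omega) k1 (by omega) ?_
    rwa [show t + (k2 + 2 - t) = k2 + 2 by omega]
  have Pinj : ∀ k1 k2, k1 < 2 * (t - 1) → k2 < 2 * (t - 1) → P k1 = P k2 → k1 = k2 := by
    intro k1 k2 h1 h2 heq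
    rcases le_or_gt k1 (t - 2) with c1 | c1 <;> rcases le_or_gt k2 (t - 2) with c2 | c2
    · simp only [hP] at heq
      rw [if_pos c1, if_pos c2] at heq
      have d1 := hL k1 (by omega)
      have d2 := hL k2 (by omega)
      rw [heq] at d1; omega
    · exact (key k1 k2 c1 c2 h2 heq).elim
    · exact (key k2 k1 c2 c1 h1 heq.symm).elim
    · simp only [hP] at heq
      rw [if_neg (by omega), if_neg (by omega)] at heq
      have d1 : T.dist (v (k1 + 2)) (v t) = k1 + 2 - t := by
        have h' := hR (k1 + 2 - t) (by omega)
        rwa [show t + (k1 + 2 - t) = k1 + 2 by omega] at h'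
      have d2 : T.dist (v (k2 + 2)) (v t) = k2 + 2 - t := by
        have h' := hR (k2 + 2 - t) (by omega)
        rwa [show t + (k2 + 2 - t) = k2 + 2 by omega] at h'
      rw [heq] at d1; omega
  have Padj : ∀ k, k + 1 < 2 * (t - 1) → T.Adj (P k) (P (k + 1)) := by
    intro k hk
    rcases le_or_gt (k + 1) (t - 2) with c | c
    · simp only [hP]
      rw [if_pos (by omega), if_pos c]
      exact hw k (by omega)
    · rcases le_or_gt k (t - 2) with c2 | c2
      · have hk2 : k = t - 2 := by omega
        subst hk2
        simp only [hP]
        rw [if_pos le_rfl, if_neg (by omega)]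
        rw [hsp2, show t - 2 + 1 + 2 = t + 1 by omega]
        exact hw t (by omega)
      · simp only [hP]
        rw [if_neg (by omega), if_neg (by omega)]
        have h' := hw (k + 2) (by omega)
        rwa [show k + 2 + 1 = k + 1 + 2 by omega] at h'
  have hps : IsPathSeq T (2 * (t - 2)) (fun j => P (1 + j)) := by
    constructor
    · intro i hi
      have h' := Padj (1 + i) (by omega)
      rwa [show 1 + i + 1 = 1 + (i + 1) by omega] at h'
    · intro i j hi hj heq
      have := Pinj (1 + i) (1 + j) (by omega) (by omega) heq
      omega
  obtain ⟨j, hj, hne⟩ := hnr (t - 2) (by omega) _ hps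
  apply hne
  show φ (P (1 + j)) = φ (P (1 + (t - 2 + j)))
  have l1 : P (1 + j) = v (1 + j) := by
    simp only [hP]; rw [if_pos (by omega)]
  have l2 : P (1 + (t - 2 + j)) = v (t + (1 + j)) := by
    simp only [hP]
    rw [if_neg (by omega), show 1 + (t - 2 + j) + 2 = t + (1 + j) by omega]
  rw [l1, l2]
  exact hc (1 + j) (by omega)

private lemma hard (h : T.IsTree) (hnr : NonrepetitiveColoring T φ)
    (hd : Distance2Coloring T φ) : WalkNonrepetitive T φ := by
  intro t
  induction t using Nat.strong_induction_on with
  | _ t IH =>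
    intro ht v hw hc
    by_cases hcoin : ∃ j, j < t ∧ v j = v (t + j)
    · obtain ⟨j, hj, hco⟩ := hcoin
      exact propagation hd hw hc hj hco
    · push_neg at hcoin
      by_cases hisp : ∃ i, i + 2 < t ∧ v i = v (i + 2)
      · obtain ⟨i, hi, hsp⟩ := hisp
        have hm : v (t + i) = v (t + i + 2) := by
          apply d2_two_nbr hd (x := v (t + i + 1))
          · exact (hw (t + i) (by omega)).symm
          · have := hw (t + i + 1) (by omega)
            rwa [show t + i + 1 + 1 = t + i + 2 by omega] at this
          · have h1 := hc i (by omega)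
            have h2 := hc (i + 2) (by omega)
            rw [show t + (i + 2) = t + i + 2 by omega] at h2
            rw [← h1, hsp, h2]
        have hIH : ∀ w : ℕ → V, IsWalkSeq T (2 * (t - 2)) w →
            (∀ j < t - 2, φ (w j) = φ (w ((t - 2) + j))) →
            ∀ j < t - 2, w j = w ((t - 2) + j) := by
          intro w hw' hc'
          exact IH (t - 2) (by omega) (by omega) w hw' hc'
        have h0t := surgery hw hc hi hsp hm hIH
        exact propagation hd hw hc ht h0t
      · by_cases hisp2 : ∃ i, t ≤ i ∧ i + 2 < 2 * t ∧ v i = v (i + 2)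
        · obtain ⟨i, hti, hi2, hsp⟩ := hisp2
          have hi' : (i - t) + 2 < t := by omega
          have hspL : v (i - t) = v (i - t + 2) := by
            apply d2_two_nbr hd (x := v (i - t + 1))
            · exact (hw (i - t) (by omega)).symm
            · have := hw (i - t + 1) (by omega)
              rwa [show i - t + 1 + 1 = i - t + 2 by omega] at this
            · have h1 := hc (i - t) (by omega)
              rw [show t + (i - t) = i by omega] at h1
              have h2 := hc (i - t + 2) (by omega)
              rw [show t + (i - t + 2) = i + 2 by omega] at h2
              rw [h1, hsp, ← h2]
          exact absurd ⟨i - t, hi', hspL⟩ hisp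
        · have hni : ∀ i, i + 2 < 2 * t → v i = v (i + 2) → i + 2 = t ∨ i + 1 = t := by
            intro i h2 hsp
            by_contra hcon
            push_neg at hcon
            rcases le_or_gt t i with hge | hlt
            · exact hisp2 ⟨i, hge, h2, hsp⟩
            · exact hisp ⟨i, by omega, hsp⟩
          exfalso
          by_cases hA2 : 2 ≤ t ∧ v (t - 2) = v t
          · by_cases hA1 : v (t - 1) = v (t + 1)
            · have ht3 : 3 ≤ t := by
                by_contra hcon
                have ht2 : t = 2 := by omega
                subst ht2
                exact hcoin 0 (by norm_num) (by simpa using hA2.2)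
              exact caseA h hd hnr ht3 hw hc hni hA2.2 hA1
            · set w : ℕ → V := fun k => v (2 * t - 1 - k) with hwdef
              have hww : IsWalkSeq T (2 * t) w := by
                intro i hi
                simp only [hwdef]
                rw [show 2 * t - 1 - (i + 1) = 2 * t - 2 - i by omega]
                have := hw (2 * t - 2 - i) (by omega)
                rw [show 2 * t - 2 - i + 1 = 2 * t - 1 - i by omega] at this
                exact this.symm
              have hcw : ∀ i < t, φ (w i) = φ (w (t + i)) := by
                intro i hi
                simp only [hwdef]
                rw [show 2 * t - 1 - (t + i) = t - 1 - i by omega]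
                have := hc (t - 1 - i) (by omega)
                rw [show t + (t - 1 - i) = 2 * t - 1 - i by omega] at this
                exact this.symm
              have hniw : ∀ i, i + 2 < 2 * t → w i = w (i + 2) → i + 2 = t ∨ i + 1 = t := by
                intro i h2 hspw
                simp only [hwdef] at hspw
                rw [show 2 * t - 1 - (i + 2) = 2 * t - 3 - i by omega] at hspw
                have := hni (2 * t - 3 - i) (by omega)
                  (by rw [show 2 * t - 3 - i + 2 = 2 * t - 1 - i by omega]; exact hspw.symm)
                omega
              have hn2w : ¬(2 ≤ t ∧ w (t - 2) = w t) := by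
                rintro ⟨h2, heq⟩
                simp only [hwdef] at heq
                rw [show 2 * t - 1 - (t - 2) = t + 1 by omega,
                  show 2 * t - 1 - t = t - 1 by omega] at heq
                exact hA1 heq.symm
              exact core h hd hnr ht hww hcw hniw hn2w
          · exact core h hd hnr ht hw hc hni hA2

end TreeWalkAux

/-- A colouring of a tree is walk-nonrepetitive iff it is path-nonrepetitive
and distance-2. -/
theorem tree_walkNonrepetitive_iff {V C : Type*} (T : SimpleGraph V) (h : T.IsTree)
    (φ : V → C) :
    WalkNonrepetitive T φ ↔ NonrepetitiveColoring T φ ∧ Distance2Coloring T φ := by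
  constructor
  · intro hwn
    constructor
    · intro t ht w hps
      by_contra hcon
      push_neg at hcon
      have hb := hwn t ht w hps.1 hcon 0 ht
      have := hps.2 0 (t + 0) (by omega) (by omega) hb
      omega
    · intro u w hne hadj hcol
      rcases hadj with hadj | ⟨x, hux, hxw⟩
      · have hwalk : IsWalkSeq T (2 * 1) (fun i => if i = 0 then u else w) := by
          intro i hi
          have : i = 0 := by omega
          subst this
          simpa using hadj
        have := hwn 1 (by norm_num) _ hwalk
          (by
            intro i hi
            have : i = 0 := by omega
            subst this
            simpa using hcol) 0 (by norm_num)
        simp at this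
        exact hne this
      · have hwalk : IsWalkSeq T (2 * 2)
            (fun i => if i = 0 then u else if i = 2 then w else x) := by
          intro i hi
          have : i < 3 := by omega
          interval_cases i
          · simpa using hux
          · simpa using hxw
          · simpa using hxw.symm
        have := hwn 2 (by norm_num) _ hwalk
          (by
            intro i hi
            interval_cases i
            · simpa using hcol
            · simp) 0 (by norm_num)
        simp at this
        exact hne this
  · rintro ⟨hnr, hd⟩
    exact hard h hnr hd
end

section
/- For every 4-list assignment L of an n-vertex path, there are at least 2^{n+1} nonrepetitive L-colourings. In particular, every path is nonrepetitively 4-choosable. -/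
/-- A colouring `c` of the path on vertices `0, 1, …, n-1` is nonrepetitive if there
is no block of `2i` consecutive vertices whose first half receives the same sequence
of colours as its second half. -/
def NonrepetitivePathColoring {C : Type*} (n : ℕ) (c : Fin n → C) : Prop :=
  ∀ j i : ℕ, ∀ _hi : 0 < i, ∀ hji : j + 2 * i ≤ n,
    ∃ k : ℕ, ∃ hk : k < i, c ⟨j + k, by omega⟩ ≠ c ⟨j + i + k, by omega⟩

/-!
Let `C m` be the number of nonrepetitive `L`-colourings of the first `m` vertices. Each of
them has at least four extensions to vertex `m`. A repetitive extension ends in a repetition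
of some period `p ≤ (m + 1) / 2`, so it is determined by its restriction to the first
`m + 1 - p` vertices, which is nonrepetitive. By strong induction `2 C k ≤ C (k + 1)` for
`k < m`, so `∑ p ≥ 1, C (m + 1 - p)` telescopes to at most `2 C m`: at most `2 C m` extensions are
repetitive and `C (m + 1) ≥ 2 C m`. With `C 1 ≥ 4` this gives `C n ≥ 2 ^ (n + 1)`.
-/

open Finset

section

variable {C : Type*}

namespace NonrepetitivePathColoring

theorem comp_castLE {m n : ℕ} (h : m ≤ n) {c : Fin n → C}
    (hc : NonrepetitivePathColoring n c) : NonrepetitivePathColoring m (c ∘ Fin.castLE h) :=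
  fun j i hi hji => hc j i hi (by omega)

theorem of_length_one (c : Fin 1 → C) : NonrepetitivePathColoring 1 c :=
  fun _ _ _ _ => by omega

end NonrepetitivePathColoring

def EndsInRepetition {n : ℕ} (c : Fin n → C) (p : ℕ) : Prop :=
  ∃ j, ∃ _ : j + 2 * p = n, ∀ k (_ : k < p), c ⟨j + k, by omega⟩ = c ⟨j + p + k, by omega⟩

namespace EndsInRepetition

variable {n p : ℕ} {c c' : Fin n → C}

theorem apply_eq (hc : EndsInRepetition c p) (v : Fin n) (hv : n - p ≤ v) :
    c v = c ⟨v - p, (Nat.sub_le _ _).trans_lt v.isLt⟩ := by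
  obtain ⟨j, rfl, hrep⟩ := hc
  convert (hrep (v - (j + p)) (by omega)).symm using 2 <;> ext <;> simp <;> omega

theorem two_mul_le (hc : EndsInRepetition c p) : 2 * p ≤ n := by
  obtain ⟨j, hj, -⟩ := hc
  omega

theorem eq_of_comp_castLE_eq (hc : EndsInRepetition c p) (hc' : EndsInRepetition c' p)
    (h : c ∘ Fin.castLE (Nat.sub_le n p) = c' ∘ Fin.castLE (Nat.sub_le n p)) : c = c' := by
  funext v
  by_cases hv : v < n - p
  · exact congrFun h ⟨v, hv⟩
  · rw [hc.apply_eq v (by omega), hc'.apply_eq v (by omega)]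
    exact congrFun h ⟨v - p, by have := v.isLt; have := hc.two_mul_le; omega⟩

end EndsInRepetition

theorem NonrepetitivePathColoring.exists_endsInRepetition {n : ℕ} {c : Fin (n + 1) → C}
    (hinit : NonrepetitivePathColoring n (Fin.init c))
    (hc : ¬ NonrepetitivePathColoring (n + 1) c) :
    ∃ p ∈ Icc 1 ((n + 1) / 2), EndsInRepetition c p := by
  simp only [NonrepetitivePathColoring, not_forall, not_exists, not_not] at hc
  obtain ⟨j, i, hi, hji, hrep⟩ := hc
  by_cases hjn : j + 2 * i ≤ n
  · obtain ⟨k, hk, hne⟩ := hinit j i hi hjn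
    exact absurd (hrep k hk) hne
  · exact ⟨i, mem_Icc.mpr ⟨hi, by omega⟩, j, by omega, hrep⟩

theorem sum_Icc_add_two_mul_le_of_two_mul_le_succ {g : ℕ → ℕ} {m : ℕ}
    (hg : ∀ k < m, 2 * g k ≤ g (k + 1)) {t : ℕ} (ht : t ≤ m) :
    ∑ p ∈ Icc 1 t, g (m + 1 - p) + 2 * g (m - t) ≤ 2 * g m := by
  induction t with
  | zero => simp
  | succ t ih =>
    rw [sum_Icc_succ_top (by omega), show m + 1 - (t + 1) = m - t by omega]
    have hstep := hg (m - (t + 1)) (by omega)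
    rw [show m - (t + 1) + 1 = m - t by omega] at hstep
    linarith [ih (by omega)]

open Classical in
noncomputable def nonrepListColorings (L : ℕ → Finset C) (m : ℕ) : Finset (Fin m → C) :=
  {c ∈ Fintype.piFinset fun v : Fin m => L v | NonrepetitivePathColoring m c}

open Classical in
noncomputable def nonrepListColoringExtensions (L : ℕ → Finset C) (m : ℕ) :
    Finset (Fin (m + 1) → C) :=
  {c ∈ Fintype.piFinset fun v : Fin (m + 1) => L v | NonrepetitivePathColoring m (Fin.init c)}

variable (L : ℕ → Finset C)

theorem mem_nonrepListColorings {m : ℕ} {c : Fin m → C} :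
    c ∈ nonrepListColorings L m ↔ (∀ v : Fin m, c v ∈ L v) ∧ NonrepetitivePathColoring m c := by
  simp [nonrepListColorings]

theorem card_nonrepListColorings_one : #(nonrepListColorings L 1) = #(L 0) := by
  simp [nonrepListColorings, NonrepetitivePathColoring.of_length_one]

theorem card_nonrepListColoringExtensions (m : ℕ) :
    #(nonrepListColoringExtensions L m) = #(L m) * #(nonrepListColorings L m) := by
  classical
  unfold nonrepListColoringExtensions nonrepListColorings
  exact card_snocEquiv_filter_piFinset (fun v : Fin (m + 1) => L v) (NonrepetitivePathColoring m)

open Classical in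
theorem card_filter_endsInRepetition_le {m p : ℕ} (hp : 1 ≤ p) :
    #{c ∈ nonrepListColoringExtensions L m | EndsInRepetition c p} ≤
      #(nonrepListColorings L (m + 1 - p)) := by
  refine card_le_card_of_injOn (· ∘ Fin.castLE (Nat.sub_le _ p)) (fun c hc => ?_)
    (fun c hc c' hc' h => ?_)
  · simp only [coe_filter, Set.mem_ofPred_eq, nonrepListColoringExtensions, mem_filter,
      Fintype.mem_piFinset] at hc
    rw [mem_coe, mem_nonrepListColorings]
    exact ⟨fun v => hc.1.1 _, hc.1.2.comp_castLE (by omega)⟩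
  · simp only [coe_filter, Set.mem_ofPred_eq] at hc hc'
    exact hc.2.eq_of_comp_castLE_eq hc'.2 h

open Classical in
theorem nonrepListColoringExtensions_subset (m : ℕ) :
    nonrepListColoringExtensions L m ⊆ nonrepListColorings L (m + 1) ∪
      (Icc 1 ((m + 1) / 2)).biUnion
        fun p => {c ∈ nonrepListColoringExtensions L m | EndsInRepetition c p} := by
  intro c hc
  simp only [nonrepListColoringExtensions, mem_filter, Fintype.mem_piFinset] at hc
  by_cases hnonrep : NonrepetitivePathColoring (m + 1) c
  · exact mem_union_left _ (mem_nonrepListColorings L |>.mpr ⟨hc.1, hnonrep⟩)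
  · obtain ⟨p, hp, hrep⟩ := hc.2.exists_endsInRepetition hnonrep
    refine mem_union_right _ (mem_biUnion.mpr ⟨p, hp, mem_filter.mpr ⟨?_, hrep⟩⟩)
    simpa [nonrepListColoringExtensions] using hc

theorem two_mul_card_nonrepListColorings_le_succ (hL : ∀ k, 4 ≤ #(L k)) (m : ℕ) :
    2 * #(nonrepListColorings L m) ≤ #(nonrepListColorings L (m + 1)) := by
  classical
  induction m using Nat.strong_induction_on with
  | _ m ih =>
  set E := nonrepListColoringExtensions L m
  set bad := fun p => {c ∈ E | EndsInRepetition c p}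
  have hE : 4 * #(nonrepListColorings L m) ≤ #E := by
    rw [card_nonrepListColoringExtensions]
    exact Nat.mul_le_mul_right _ (hL m)
  have hbad : ∑ p ∈ Icc 1 ((m + 1) / 2), #(bad p) ≤ 2 * #(nonrepListColorings L m) :=
    calc ∑ p ∈ Icc 1 ((m + 1) / 2), #(bad p)
        ≤ ∑ p ∈ Icc 1 ((m + 1) / 2), #(nonrepListColorings L (m + 1 - p)) :=
          sum_le_sum fun p hp => card_filter_endsInRepetition_le L (mem_Icc.mp hp).1
      _ ≤ 2 * #(nonrepListColorings L m) :=
          le_of_add_le_left (sum_Icc_add_two_mul_le_of_two_mul_le_succ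
            (g := fun k => #(nonrepListColorings L k)) ih (by omega))
  suffices 4 * #(nonrepListColorings L m) ≤
      #(nonrepListColorings L (m + 1)) + 2 * #(nonrepListColorings L m) by omega
  calc 4 * #(nonrepListColorings L m)
      ≤ #(nonrepListColorings L (m + 1) ∪ (Icc 1 ((m + 1) / 2)).biUnion bad) :=
        hE.trans (card_le_card (nonrepListColoringExtensions_subset L m))
    _ ≤ #(nonrepListColorings L (m + 1)) + ∑ p ∈ Icc 1 ((m + 1) / 2), #(bad p) :=
        (card_union_le _ _).trans (Nat.add_le_add_left card_biUnion_le _)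
    _ ≤ #(nonrepListColorings L (m + 1)) + 2 * #(nonrepListColorings L m) :=
        Nat.add_le_add_left hbad _

theorem two_pow_succ_le_card_nonrepListColorings (hL : ∀ k, 4 ≤ #(L k)) {m : ℕ} (hm : 1 ≤ m) :
    2 ^ (m + 1) ≤ #(nonrepListColorings L m) := by
  induction m, hm using Nat.le_induction with
  | base => simpa [card_nonrepListColorings_one] using hL 0
  | succ m _ ih =>
    calc 2 ^ (m + 1 + 1) = 2 * 2 ^ (m + 1) := by ring
      _ ≤ 2 * #(nonrepListColorings L m) := by omega
      _ ≤ #(nonrepListColorings L (m + 1)) := two_mul_card_nonrepListColorings_le_succ L hL m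

end

/-- For every 4-list assignment `L` of an `n`-vertex path, there are at least
`2^(n+1)` nonrepetitive `L`-colourings; in particular paths are nonrepetitively
4-choosable. -/
theorem path_four_list_count {C : Type*} (n : ℕ) (hn : 1 ≤ n)
    (L : Fin n → Finset C) (hL : ∀ v : Fin n, 4 ≤ (L v).card) :
    2 ^ (n + 1) ≤
      Set.ncard {c : Fin n → C | (∀ v, c v ∈ L v) ∧ NonrepetitivePathColoring n c} := by
  let L' : ℕ → Finset C := fun k => if h : k < n then L ⟨k, h⟩ else L ⟨0, hn⟩
  have hL' : ∀ k, 4 ≤ #(L' k) := fun k => by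
    by_cases h : k < n <;> simp [L', h, hL]
  have hset : {c : Fin n → C | (∀ v, c v ∈ L v) ∧ NonrepetitivePathColoring n c} =
      nonrepListColorings L' n := by
    ext c
    simp [mem_nonrepListColorings, L']
  rw [hset, Set.ncard_coe_finset]
  exact two_pow_succ_le_card_nonrepListColorings L' hL' hn
end

section
/- Fix an integer r ≥ 4 and set k = (r + √(r²−4r))/2. For every r-list assignment L of an n-vertex path, the number of nonrepetitive L-colourings is at least k^n. In particular k ≥ r − 2, so there are at least (r−2)^n nonrepetitive L-colourings. -/
open scoped Classical

lemma nonrep_restrict {C : Type*} {m m' : ℕ} (h : m' ≤ m) {d : Fin m → C}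
    (hd : NonrepetitivePathColoring m d) :
    NonrepetitivePathColoring m' (fun v => d (Fin.castLE h v)) := by
  intro j i hi hji
  obtain ⟨k, hk, hne⟩ := hd j i hi (hji.trans h)
  exact ⟨k, hk, hne⟩

/-- The finset of nonrepetitive partial list-colourings of the first `m` vertices. -/
noncomputable def nrT {C : Type*} {n : ℕ} (L : Fin n → Finset C) (m : ℕ) (hm : m ≤ n) :
    Finset (Fin m → C) :=
  (Fintype.piFinset (fun v : Fin m => L (Fin.castLE hm v))).filter
    (fun c => NonrepetitivePathColoring m c)

lemma mem_nrT {C : Type*} {n : ℕ} {L : Fin n → Finset C} {m : ℕ} {hm : m ≤ n}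
    {c : Fin m → C} :
    c ∈ nrT L m hm ↔ (∀ v, c v ∈ L (Fin.castLE hm v)) ∧ NonrepetitivePathColoring m c := by
  simp [nrT, Fintype.mem_piFinset]

lemma nrT_zero_nonempty {C : Type*} {n : ℕ} (L : Fin n → Finset C) (h : 0 ≤ n) :
    (nrT L 0 h).Nonempty := by
  refine ⟨fun v => v.elim0, ?_⟩
  rw [mem_nrT]
  exact ⟨fun v => v.elim0, fun j i hi hji => by omega⟩

set_option maxHeartbeats 1600000 in
lemma nrT_step {C : Type*} {n : ℕ} {L : Fin n → Finset C} (r : ℕ)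
    (hL : ∀ v, r ≤ (L v).card) (k : ℝ) (hk2 : 2 ≤ k)
    (hkeq : k ^ 2 - r * k + r = 0) :
    ∀ m (hm : m + 1 ≤ n),
      k * ((nrT L m (by omega)).card : ℝ) ≤ ((nrT L (m + 1) hm).card : ℝ) := by
  intro m
  induction m using Nat.strong_induction_on with
  | _ m IH =>
    intro hm
    have hmn : m ≤ n := by omega
    have hk0 : (0:ℝ) < k := by linarith
    have hk1 : (1:ℝ) < k := by linarith
    set I := (m + 1) / 2 with hI
    set x0 : Fin n := ⟨m, hm⟩ with hx0
    set E : Finset (Fin (m + 1) → C) :=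
      ((nrT L m hmn) ×ˢ (L x0)).image (fun p => Fin.snoc p.1 p.2) with hE
    -- cardinality of E
    have hcardE : E.card = (nrT L m hmn).card * (L x0).card := by
      rw [hE, ← Finset.card_product]
      apply Finset.card_image_of_injOn
      intro p _ q _ hpq
      have h1 : p.2 = q.2 := by
        have := congrFun hpq (Fin.last m)
        simpa [Fin.snoc_last] using this
      have h2 : p.1 = q.1 := by
        funext v
        have := congrFun hpq v.castSucc
        simpa [Fin.snoc_castSucc] using this
      exact Prod.ext h2 h1
    -- members of E have all list memberships and nonrepetitive initial part
    have hE_mem : ∀ d ∈ E, (∀ v : Fin (m + 1), d v ∈ L (Fin.castLE hm v)) ∧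
        NonrepetitivePathColoring m (fun v => d (Fin.castLE (Nat.le_succ m) v)) := by
      intro d hd
      obtain ⟨p, hp, rfl⟩ := Finset.mem_image.1 hd
      obtain ⟨hp1, hp2⟩ := Finset.mem_product.1 hp
      rw [mem_nrT] at hp1
      constructor
      · intro v
        induction v using Fin.lastCases with
        | last =>
          rw [Fin.snoc_last]
          have : Fin.castLE hm (Fin.last m) = x0 := Fin.ext rfl
          rw [this]; exact hp2
        | cast v =>
          rw [Fin.snoc_castSucc]
          have : Fin.castLE hm v.castSucc = Fin.castLE hmn v := Fin.ext rfl
          rw [this]; exact hp1.1 v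
      · have hfun : (fun v : Fin m => Fin.snoc (α := fun _ => C) p.1 p.2 (Fin.castLE (Nat.le_succ m) v)) = p.1 := by
          funext v
          calc Fin.snoc (α := fun _ => C) p.1 p.2 (Fin.castLE (Nat.le_succ m) v)
              = Fin.snoc (α := fun _ => C) p.1 p.2 v.castSucc := congrArg _ (Fin.ext rfl)
            _ = p.1 v := Fin.snoc_castSucc ..
        rw [hfun]; exact hp1.2
    -- every full nonrepetitive colouring is in E
    have hsub : nrT L (m + 1) hm ⊆ E := by
      intro d hd
      rw [mem_nrT] at hd
      rw [hE]
      apply Finset.mem_image.2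
      refine ⟨(Fin.init d, d (Fin.last m)), Finset.mem_product.2 ⟨?_, ?_⟩, Fin.snoc_init_self d⟩
      · rw [mem_nrT]
        constructor
        · intro v
          have h := hd.1 v.castSucc
          have e : Fin.castLE hm v.castSucc = Fin.castLE hmn v := Fin.ext rfl
          rw [e] at h
          exact h
        · have h := nonrep_restrict (Nat.le_succ m) hd.2
          have e : Fin.init d = fun v : Fin m => d (Fin.castLE (Nat.le_succ m) v) := by
            funext v
            show d v.castSucc = d (Fin.castLE (Nat.le_succ m) v)
            exact congrArg d (Fin.ext rfl)
          rw [e]; exact h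
      · have h := hd.1 (Fin.last m)
        have e : Fin.castLE hm (Fin.last m) = x0 := Fin.ext rfl
        rw [e] at h
        exact h
    -- bad extensions
    set P : ℕ → (Fin (m + 1) → C) → Prop := fun i d =>
      ∃ _h2 : 2 * i ≤ m + 1, ∀ kk : ℕ, ∀ _hkk : kk < i,
        d ⟨m + 1 - 2 * i + kk, by omega⟩ = d ⟨m + 1 - i + kk, by omega⟩ with hP
    set bads : Finset (Fin (m + 1) → C) :=
      (Finset.Icc 1 I).biUnion (fun i => E.filter (P i)) with hbads
    have hcover : E ⊆ nrT L (m + 1) hm ∪ bads := by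
      intro d hd
      rw [Finset.mem_union]
      by_cases hgood : d ∈ nrT L (m + 1) hm
      · exact Or.inl hgood
      right
      have hdmem := hE_mem d hd
      rw [mem_nrT] at hgood
      push_neg at hgood
      have hnr := hgood hdmem.1
      rw [NonrepetitivePathColoring] at hnr
      push_neg at hnr
      obtain ⟨j, i, hi, hji, hrep⟩ := hnr
      have hjieq : j + 2 * i = m + 1 := by
        by_contra hne
        have hji' : j + 2 * i ≤ m := by omega
        obtain ⟨kk, hkk, hne2⟩ := hdmem.2 j i hi hji'
        exact hne2 (hrep kk hkk)
      refine Finset.mem_biUnion.2 ⟨i, Finset.mem_Icc.2 ⟨hi, by omega⟩,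
        Finset.mem_filter.2 ⟨hd, ?_⟩⟩
      refine ⟨by omega, fun kk hkk => ?_⟩
      calc d ⟨m + 1 - 2 * i + kk, by omega⟩
          = d ⟨j + kk, by omega⟩ := congrArg d (Fin.ext (by simp; omega))
        _ = d ⟨j + i + kk, by omega⟩ := hrep kk hkk
        _ = d ⟨m + 1 - i + kk, by omega⟩ := congrArg d (Fin.ext (by simp; omega))
    -- bad extensions with repetition half-length i inject into nrT (m+1-i)
    have hbadcard : ∀ i ∈ Finset.Icc 1 I,
        (E.filter (P i)).card ≤ (nrT L (m + 1 - i) (by omega)).card := by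
      intro i hiI
      rw [Finset.mem_Icc] at hiI
      have h2i : 2 * i ≤ m + 1 := by omega
      have hile : m + 1 - i ≤ m + 1 := by omega
      apply Finset.card_le_card_of_injOn
        (fun d (v : Fin (m + 1 - i)) => d (Fin.castLE hile v))
      · intro d hd
        rw [Finset.mem_coe, Finset.mem_filter] at hd
        have hdmem := hE_mem d hd.1
        rw [Finset.mem_coe, mem_nrT]
        constructor
        · intro v
          have h := hdmem.1 (Fin.castLE hile v)
          have e : Fin.castLE hm (Fin.castLE hile v) = Fin.castLE (by omega) v :=
            Fin.ext rfl
          rw [e] at h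
          exact h
        · have h := nonrep_restrict (show m + 1 - i ≤ m by omega) hdmem.2
          have e : (fun v : Fin (m + 1 - i) => d (Fin.castLE hile v)) =
              fun v : Fin (m + 1 - i) =>
                (fun w : Fin m => d (Fin.castLE (Nat.le_succ m) w))
                  (Fin.castLE (show m + 1 - i ≤ m by omega) v) := by
            funext v
            exact congrArg d (Fin.ext rfl)
          beta_reduce; rw [e]; exact h
      · intro d hd d' hd' hFd
        obtain ⟨_, _, hrepd⟩ := Finset.mem_filter.1 (Finset.mem_coe.1 hd)
        obtain ⟨_, _, hrepd'⟩ := Finset.mem_filter.1 (Finset.mem_coe.1 hd')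
        have hagree : ∀ w : ℕ, ∀ hw : w < m + 1 - i,
            d ⟨w, by omega⟩ = d' ⟨w, by omega⟩ := by
          intro w hw
          have h3 := congrFun hFd ⟨w, hw⟩
          calc d ⟨w, by omega⟩
              = d (Fin.castLE hile ⟨w, hw⟩) := congrArg d (Fin.ext rfl)
            _ = d' (Fin.castLE hile ⟨w, hw⟩) := h3
            _ = d' ⟨w, by omega⟩ := congrArg d' (Fin.ext rfl)
        funext v
        rcases lt_or_ge v.val (m + 1 - i) with hv | hv
        · calc d v = d ⟨v.val, by omega⟩ := congrArg d (Fin.ext rfl)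
            _ = d' ⟨v.val, by omega⟩ := hagree v.val hv
            _ = d' v := congrArg d' (Fin.ext rfl)
        · have hkk : v.val - (m + 1 - i) < i := by omega
          calc d v
              = d ⟨m + 1 - i + (v.val - (m + 1 - i)), by omega⟩ :=
                congrArg d (Fin.ext (by simp; omega))
            _ = d ⟨m + 1 - 2 * i + (v.val - (m + 1 - i)), by omega⟩ :=
                (hrepd _ hkk).symm
            _ = d' ⟨m + 1 - 2 * i + (v.val - (m + 1 - i)), by omega⟩ :=
                hagree _ (by omega)
            _ = d' ⟨m + 1 - i + (v.val - (m + 1 - i)), by omega⟩ := hrepd' _ hkk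
            _ = d' v := congrArg d' (Fin.ext (by simp; omega))
    -- natural number inequality
    have hNat : (nrT L m hmn).card * r ≤
        (nrT L (m + 1) hm).card +
          ∑ i ∈ Finset.Icc 1 I, (nrT L (m + 1 - i) (by omega)).card := by
      calc (nrT L m hmn).card * r
          ≤ (nrT L m hmn).card * (L x0).card := Nat.mul_le_mul_left _ (hL x0)
        _ = E.card := hcardE.symm
        _ ≤ (nrT L (m + 1) hm ∪ bads).card := Finset.card_le_card hcover
        _ ≤ (nrT L (m + 1) hm).card + bads.card := Finset.card_union_le _ _
        _ ≤ (nrT L (m + 1) hm).card +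
              ∑ i ∈ Finset.Icc 1 I, (E.filter (P i)).card := by
            rw [hbads]
            exact Nat.add_le_add_left (Finset.card_biUnion_le) _
        _ ≤ _ := Nat.add_le_add_left (Finset.sum_le_sum hbadcard) _
    -- chain bound from IH
    have hchain : ∀ t j, j + t = m → ∀ hj : j ≤ n,
        k ^ t * ((nrT L j hj).card : ℝ) ≤ ((nrT L m hmn).card : ℝ) := by
      intro t
      induction t with
      | zero =>
        intro j hjm hj
        obtain rfl : j = m := by omega
        simp
      | succ t iht =>
        intro j hjt hj
        have hj1 : j + 1 ≤ n := by omega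
        have h1 : k * ((nrT L j (by omega)).card : ℝ) ≤ ((nrT L (j + 1) hj1).card : ℝ) :=
          IH j (by omega) hj1
        have h2 := iht (j + 1) (by omega) hj1
        calc k ^ (t + 1) * ((nrT L j hj).card : ℝ)
            = k ^ t * (k * ((nrT L j hj).card : ℝ)) := by ring
          _ ≤ k ^ t * ((nrT L (j + 1) hj1).card : ℝ) := by
              apply mul_le_mul_of_nonneg_left _ (pow_nonneg (le_of_lt hk0) t)
              exact h1
          _ ≤ _ := h2
    -- per-term real bound
    have hterm : ∀ i ∈ Finset.Icc 1 I,
        ((nrT L (m + 1 - i) (by omega)).card : ℝ) ≤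
          (1 / k) ^ (i - 1) * ((nrT L m hmn).card : ℝ) := by
      intro i hiI
      rw [Finset.mem_Icc] at hiI
      have h2i : 2 * i ≤ m + 1 := by omega
      have hc := hchain (i - 1) (m + 1 - i) (by omega) (by omega)
      have hp : (0:ℝ) < k ^ (i - 1) := pow_pos hk0 _
      rw [div_pow, one_pow, div_mul_eq_mul_div, le_div_iff₀ hp]
      linarith [hc]
    -- geometric sum
    have hgeom : ∑ i ∈ Finset.Icc 1 I, ((1:ℝ) / k) ^ (i - 1) ≤ k / (k - 1) := by
      have h1 : ∑ i ∈ Finset.Icc 1 I, ((1:ℝ) / k) ^ (i - 1) =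
          ∑ i ∈ Finset.range I, (1 / k) ^ i := by
        rw [show Finset.Icc 1 I = Finset.Ico 1 (I + 1) from by rw [Finset.Ico_add_one_right_eq_Icc],
          Finset.sum_Ico_eq_sum_range]
        refine Finset.sum_congr (by norm_num) (fun i _ => by congr 1; omega)
      rw [h1]
      have hxlt : 1 / k < 1 := by rw [div_lt_one hk0]; linarith
      have hxpos : (0:ℝ) < 1 / k := by positivity
      have hxI : (0:ℝ) ≤ (1 / k) ^ I := by positivity
      rw [geom_sum_eq (ne_of_lt hxlt)]
      rw [← neg_div_neg_eq, neg_sub, neg_sub]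
      have h1x : (0:ℝ) < 1 - 1 / k := by linarith
      have h2 : (1:ℝ) - (1 / k) ^ I ≤ 1 := by linarith
      calc (1 - (1 / k) ^ I) / (1 - 1 / k) ≤ 1 / (1 - 1 / k) := by gcongr
        _ = k / (k - 1) := by
            rw [show (1:ℝ) - 1 / k = (k - 1) / k from by field_simp, one_div_div]
    -- sum bound
    have hsum : ∑ i ∈ Finset.Icc 1 I, ((nrT L (m + 1 - i) (by omega)).card : ℝ) ≤
        (k / (k - 1)) * ((nrT L m hmn).card : ℝ) := by
      calc ∑ i ∈ Finset.Icc 1 I, ((nrT L (m + 1 - i) (by omega)).card : ℝ)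
          ≤ ∑ i ∈ Finset.Icc 1 I, (1 / k) ^ (i - 1) * ((nrT L m hmn).card : ℝ) :=
            Finset.sum_le_sum hterm
        _ = (∑ i ∈ Finset.Icc 1 I, ((1:ℝ) / k) ^ (i - 1)) * ((nrT L m hmn).card : ℝ) := by
            rw [Finset.sum_mul]
        _ ≤ (k / (k - 1)) * ((nrT L m hmn).card : ℝ) := by
            apply mul_le_mul_of_nonneg_right hgeom (Nat.cast_nonneg _)
    -- combine
    have hNatR : ((nrT L m hmn).card : ℝ) * r ≤
        ((nrT L (m + 1) hm).card : ℝ) +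
          ∑ i ∈ Finset.Icc 1 I, ((nrT L (m + 1 - i) (by omega)).card : ℝ) := by
      have h0 : (((nrT L m hmn).card * r : ℕ) : ℝ) ≤
          (((nrT L (m + 1) hm).card +
            ∑ i ∈ Finset.Icc 1 I, (nrT L (m + 1 - i) (by omega)).card : ℕ) : ℝ) :=
        Nat.cast_le.2 hNat
      push_cast at h0
      convert h0 using 3
    have halg : k / (k - 1) = r - k := by
      rw [div_eq_iff (by linarith : k - 1 ≠ 0)]
      linear_combination hkeq
    rw [halg] at hsum
    linarith

lemma nrT_pow {C : Type*} {n : ℕ} {L : Fin n → Finset C} (r : ℕ)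
    (hL : ∀ v, r ≤ (L v).card) (k : ℝ) (hk2 : 2 ≤ k)
    (hkeq : k ^ 2 - r * k + r = 0) :
    ∀ m (hm : m ≤ n), k ^ m ≤ ((nrT L m hm).card : ℝ) := by
  intro m
  induction m with
  | zero =>
    intro hm
    have h : 0 < (nrT L 0 hm).card := Finset.card_pos.2 (nrT_zero_nonempty L hm)
    have h1 : (1:ℝ) ≤ ((nrT L 0 hm).card : ℝ) := by exact_mod_cast h
    simpa using h1
  | succ m ihm =>
    intro hm
    have hmn : m ≤ n := by omega
    calc k ^ (m + 1) = k * k ^ m := by ring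
      _ ≤ k * ((nrT L m hmn).card : ℝ) := by
          apply mul_le_mul_of_nonneg_left (ihm hmn) (by linarith)
      _ ≤ ((nrT L (m + 1) hm).card : ℝ) := nrT_step r hL k hk2 hkeq m hm

/-- Fix `r ≥ 4` and `k = (r + √(r²-4r))/2`. For every `r`-list assignment of an
`n`-vertex path there are at least `k^n` nonrepetitive `L`-colourings; in
particular `k ≥ r - 2`, so there are at least `(r-2)^n` such colourings. -/
theorem path_r_list_count {C : Type*} (r : ℕ) (hr : 4 ≤ r) (n : ℕ)
    (L : Fin n → Finset C) (hL : ∀ v : Fin n, r ≤ (L v).card)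
    (k : ℝ) (hk : k = ((r : ℝ) + Real.sqrt ((r : ℝ) ^ 2 - 4 * r)) / 2) :
    (r : ℝ) - 2 ≤ k ∧
    k ^ n ≤
      (Set.ncard {c : Fin n → C | (∀ v, c v ∈ L v) ∧ NonrepetitivePathColoring n c} : ℝ) := by
  have hr4 : (4:ℝ) ≤ (r:ℝ) := by exact_mod_cast hr
  have hs0 : (0:ℝ) ≤ (r:ℝ) ^ 2 - 4 * r := by nlinarith
  set s : ℝ := Real.sqrt ((r:ℝ) ^ 2 - 4 * r) with hs
  have hsq : s ^ 2 = (r:ℝ) ^ 2 - 4 * r := Real.sq_sqrt hs0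
  have hge : (r:ℝ) - 4 ≤ s := by
    have h1 : ((r:ℝ) - 4) ^ 2 ≤ (r:ℝ) ^ 2 - 4 * r := by nlinarith
    have h2 := Real.sqrt_le_sqrt h1
    rwa [Real.sqrt_sq (by linarith : (0:ℝ) ≤ (r:ℝ) - 4)] at h2
  have hpart1 : (r:ℝ) - 2 ≤ k := by rw [hk]; linarith
  have hk2 : (2:ℝ) ≤ k := by linarith
  have hkeq : k ^ 2 - r * k + r = 0 := by
    rw [hk]; linear_combination (1/4 : ℝ) * hsq
  refine ⟨hpart1, ?_⟩
  have hset : {c : Fin n → C | (∀ v, c v ∈ L v) ∧ NonrepetitivePathColoring n c} =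
      ↑(nrT L n le_rfl) := by
    ext c
    simp only [Set.mem_setOf_eq, Finset.coe_filter, nrT, Set.mem_setOf_eq,
      Fintype.mem_piFinset]
    constructor
    · rintro ⟨h1, h2⟩
      exact ⟨fun v => by simpa using h1 v, h2⟩
    · rintro ⟨h1, h2⟩
      exact ⟨fun v => by simpa using h1 v, h2⟩
  rw [hset, Set.ncard_coe_finset]
  exact nrT_pow r hL k hk2 hkeq n le_rfl
end
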